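/- arXiv:1508.05175 — 7 statements merged into one kernel-verified Lean document; each statement's English description precedes it below -/
import Mathlib

section
/- Under the new placement with distinct demands, if K ≥ m (so that t := K/m satisfies 1 ≤ t ≤ K), then the expected rate satisfies E[R] ≥ K·(1 − 1/m) − F'·K²·exp(−2t·(1 − t/K)·(1 − 1/K)). -/
open MeasureTheory ProbabilityTheory Finset
open scoped ENNReal

/-!
For each user `k`, every packet of file `d k` not cached by `k` (there are `F'(m-1)` of them)
is stored by exactly the caches of one set `S ∖ {k}`, so `∑_S ∑_{k ∈ S} V_{k,S∖k} = K F'(m-1)`.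
Bounding `max_{k ∈ S} V_k ≥ ∑_{k ∈ S} V_k - ∑_{k ≠ k' ∈ S} V_k V_{k'}` turns this into
`R ≥ K(1 - 1/m) - W/(mF')` with `W` the sum of the pair products. Distinct users request
distinct files, so `V_{k,S∖k}` and `V_{k',S∖k'}` depend on disjoint sets of independent
variables; hence `E[W]` factorizes and sums to `(mF')² K(K-1) t² (1-2t)^(K-2)` with
`t = (1/m)(1 - 1/m)`, and `1 - 2t ≤ exp(-2t)` gives the exponential bound.
-/

theorem Finset.sum_le_sup_add_sum_sum_erase_mul {α : Type*} [DecidableEq α] (S : Finset α)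
    (f : α → ℕ) : ∑ k ∈ S, f k ≤ S.sup f + ∑ k ∈ S, ∑ k' ∈ S.erase k, f k * f k' := by
  rcases S.eq_empty_or_nonempty with rfl | hS
  · simp
  obtain ⟨a, ha, hfa⟩ := S.exists_mem_eq_sup hS f
  rw [← add_sum_erase S f ha, hfa]
  gcongr
  calc ∑ k ∈ S.erase a, f k ≤ ∑ k ∈ S.erase a, f a * f k := by
        refine sum_le_sum fun k hk => ?_
        have hle : f k ≤ f a := hfa ▸ le_sup (mem_of_mem_erase hk)
        rcases Nat.eq_zero_or_pos (f a) with h | h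
        · omega
        · exact Nat.le_mul_of_pos_left _ h
    _ ≤ ∑ k ∈ S, ∑ k' ∈ S.erase k, f k * f k' :=
        single_le_sum (f := fun k => ∑ k' ∈ S.erase k, f k * f k') (fun _ _ => Nat.zero_le _) ha

theorem Finset.card_filter_mem_and_erase_eq {ι : Type*} [Fintype ι] [DecidableEq ι] (k : ι)
    (T : Finset ι) : #{S : Finset ι | k ∈ S ∧ S.erase k = T} = if k ∈ T then 0 else 1 := by
  split_ifs with hkT
  · refine card_eq_zero.mpr (filter_eq_empty_iff.mpr ?_)
    rintro S - ⟨-, rfl⟩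
    exact notMem_erase k S hkT
  · refine card_eq_one.mpr ⟨insert k T, ext fun S => ?_⟩
    simp only [mem_filter, mem_univ, true_and, mem_singleton]
    constructor
    · rintro ⟨hk, rfl⟩
      exact (insert_erase hk).symm
    · rintro rfl
      exact ⟨mem_insert_self k T, erase_insert hkT⟩

section Counting

variable {ι R : Type*} [Fintype ι] [DecidableEq ι] [CommSemiring R]

theorem sum_filter_mem_and_mem_pow (x y : R) {k k' : ι} (hkk' : k ≠ k') :
    ∑ S : Finset ι with k ∈ S ∧ k' ∈ S, x ^ (#S - 1) * y ^ (Fintype.card ι - (#S - 1)) =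
      x * y * (x + y) ^ (Fintype.card ι - 2) := by
  set u := (univ.erase k).erase k'
  have hu : #u = Fintype.card ι - 2 := by
    rw [card_erase_of_mem (by simp [hkk'.symm]), card_erase_of_mem (mem_univ k), card_univ]
    omega
  rw [← hu, ← sum_pow_mul_eq_add_pow, mul_sum]
  refine sum_nbij' (fun S => (S.erase k).erase k') (fun T => insert k (insert k' T)) ?_ ?_ ?_ ?_ ?_
  · intro S _
    exact mem_powerset.mpr (erase_subset_erase k' (erase_subset_erase k (subset_univ S)))
  · intro T _
    simp
  · intro S hS
    obtain ⟨hk, hk'⟩ := (mem_filter.mp hS).2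
    rw [insert_erase (mem_erase.mpr ⟨hkk'.symm, hk'⟩), insert_erase hk]
  · intro T hT
    have hTu := mem_powerset.mp hT
    have hk'T : k' ∉ T := fun h => by simpa [u] using hTu h
    have hkT : k ∉ insert k' T := by
      rw [mem_insert, not_or]
      exact ⟨hkk', fun h => by simpa [u] using hTu h⟩
    rw [erase_insert hkT, erase_insert hk'T]
  · intro S hS
    obtain ⟨hk, hk'⟩ := (mem_filter.mp hS).2
    have hcard : #((S.erase k).erase k') + 2 = #S := by
      rw [card_erase_of_mem (mem_erase.mpr ⟨hkk'.symm, hk'⟩), card_erase_of_mem hk]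
      have := card_pos.mpr ⟨k', mem_erase.mpr ⟨hkk'.symm, hk'⟩⟩
      rw [card_erase_of_mem hk] at this
      omega
    have hS_le := card_le_univ S
    rw [show Fintype.card ι - (#S - 1) = #u - #((S.erase k).erase k') + 1 by omega,
      show #S - 1 = #((S.erase k).erase k') + 1 by omega]
    ring

theorem sum_sum_sum_erase_pow (x y : R) :
    ∑ S : Finset ι, ∑ k ∈ S, ∑ _k' ∈ S.erase k, x ^ (#S - 1) * y ^ (Fintype.card ι - (#S - 1)) =
      (Fintype.card ι * (Fintype.card ι - 1) : ℕ) * (x * y * (x + y) ^ (Fintype.card ι - 2)) := by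
  calc _ = ∑ k, ∑ S : Finset ι with k ∈ S, ∑ _k' ∈ S.erase k,
          x ^ (#S - 1) * y ^ (Fintype.card ι - (#S - 1)) := sum_comm' (by simp)
    _ = ∑ k, ∑ k' ∈ univ.erase k, ∑ S : Finset ι with k ∈ S ∧ k' ∈ S,
          x ^ (#S - 1) * y ^ (Fintype.card ι - (#S - 1)) :=
        sum_congr rfl fun k _ => sum_comm' (by
          simp only [mem_filter, mem_univ, true_and, mem_erase, ne_eq, and_true]; tauto)
    _ = _ := by
        rw [sum_congr rfl fun k _ => sum_congr rfl fun k' hk' =>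
          sum_filter_mem_and_mem_pow x y (mem_erase.mp hk').1.symm]
        simp [card_erase_of_mem, nsmul_eq_mul, mul_assoc]

end Counting

section Placement

variable {ι ν G α : Type*} [Fintype ι] [DecidableEq ι] [Fintype G] [Fintype α] [DecidableEq α]

/-- `u (j, n, g)` is the packet of group `g` of file `n` held by cache `j`; the paper's
`V_{k,S∖k}` is `exactCount u (d k) (S.erase k)`. -/
def exactCount (u : ι × ν × G → α) (n : ν) (T : Finset ι) : ℕ :=
  #{p : G × α | ∀ j, u (j, n, p.1) = p.2 ↔ j ∈ T}

-- A packet of file `n` not held by cache `k` is counted once, for `S = {k} ∪ {caches holding it}`.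
theorem sum_exactCount_erase (u : ι × ν × G → α) (n : ν) (k : ι) :
    ∑ S : Finset ι with k ∈ S, exactCount u n (S.erase k) =
      Fintype.card G * (Fintype.card α - 1) := by
  have hcount : ∀ p : G × α, #{S : Finset ι | k ∈ S ∧ ∀ j, u (j, n, p.1) = p.2 ↔ j ∈ S.erase k}
      = if u (k, n, p.1) = p.2 then 0 else 1 := by
    intro p
    convert card_filter_mem_and_erase_eq k {j | u (j, n, p.1) = p.2} using 3 with S
    · rw [eq_comm, Finset.ext_iff]
      simp
    · simp
  calc ∑ S : Finset ι with k ∈ S, exactCount u n (S.erase k)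
      = ∑ p : G × α, #{S : Finset ι | k ∈ S ∧ ∀ j, u (j, n, p.1) = p.2 ↔ j ∈ S.erase k} := by
        simp only [exactCount, card_filter, sum_filter]
        rw [sum_comm]
        simp [ite_and]
    _ = ∑ g : G, ∑ a : α, if u (k, n, g) = a then 0 else 1 := by
        rw [sum_congr rfl fun p _ => hcount p, Fintype.sum_prod_type]
    _ = Fintype.card G * (Fintype.card α - 1) := by
        simp [sum_ite, filter_ne, card_erase_of_mem]

theorem card_mul_le_sum_sup_add_sum_pairs (u : ι × ν × G → α) (d : ι → ν) :
    Fintype.card ι * (Fintype.card G * (Fintype.card α - 1)) ≤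
      ∑ S : Finset ι, S.sup (fun k => exactCount u (d k) (S.erase k)) +
        ∑ S : Finset ι, ∑ k ∈ S, ∑ k' ∈ S.erase k,
          exactCount u (d k) (S.erase k) * exactCount u (d k') (S.erase k') := by
  calc Fintype.card ι * (Fintype.card G * (Fintype.card α - 1))
      = ∑ k, ∑ S : Finset ι with k ∈ S, exactCount u (d k) (S.erase k) := by
        simp [sum_exactCount_erase]
    _ = ∑ S : Finset ι, ∑ k ∈ S, exactCount u (d k) (S.erase k) := sum_comm' (by simp)
    _ ≤ _ := by
        rw [← sum_add_distrib]
        exact sum_le_sum fun S _ => S.sum_le_sup_add_sum_sum_erase_mul _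

noncomputable def greedyRate (u : ι × ν × G → α) (d : ι → ν) : ℝ :=
  1 / (Fintype.card α * Fintype.card G) *
    ∑ S : Finset ι with S.Nonempty, ((S.sup fun k => exactCount u (d k) (S.erase k) : ℕ) : ℝ)

def pairSum (u : ι × ν × G → α) (d : ι → ν) : ℝ :=
  ∑ S : Finset ι, ∑ k ∈ S, ∑ k' ∈ S.erase k,
    (exactCount u (d k) (S.erase k) : ℝ) * exactCount u (d k') (S.erase k')

theorem card_mul_one_sub_inv_sub_le_greedyRate [Nonempty G] [Nonempty α] (u : ι × ν × G → α)
    (d : ι → ν) :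
    Fintype.card ι * (1 - 1 / Fintype.card α) - pairSum u d / (Fintype.card α * Fintype.card G)
      ≤ greedyRate u d := by
  have hα : (1 : ℝ) ≤ Fintype.card α := by exact_mod_cast Fintype.card_pos
  have hG : (0 : ℝ) < Fintype.card G := by exact_mod_cast Fintype.card_pos
  have h := card_mul_le_sum_sup_add_sum_pairs u d
  rw [← sum_filter_of_ne (p := Finset.Nonempty) fun S _ hS =>
    nonempty_of_ne_empty (by rintro rfl; simp at hS)] at h
  have hcast : (Fintype.card ι * (Fintype.card G * (Fintype.card α - 1)) : ℝ) ≤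
      ∑ S : Finset ι with S.Nonempty, ((S.sup fun k => exactCount u (d k) (S.erase k) : ℕ) : ℝ)
        + pairSum u d := by
    have := Nat.cast_le (α := ℝ) |>.mpr h
    push_cast [Nat.cast_sub Fintype.card_pos] at this
    exact this
  rw [greedyRate, show (Fintype.card ι : ℝ) * (1 - 1 / Fintype.card α) -
      pairSum u d / (Fintype.card α * Fintype.card G) =
      1 / (Fintype.card α * Fintype.card G) *
        (Fintype.card ι * (Fintype.card G * (Fintype.card α - 1)) - pairSum u d) by
    field_simp]
  gcongr
  linarith

end Placement

section Probability

variable {Ω : Type*} [MeasurableSpace Ω] {μ : Measure Ω}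

theorem integrable_comp_of_finite [IsFiniteMeasure μ] {β : Type*} [Finite β] [MeasurableSpace β]
    [MeasurableSingletonClass β] {J : Ω → β} (hJ : Measurable J) (g : β → ℝ) :
    Integrable (fun ω => g (J ω)) μ := by
  cases isEmpty_or_nonempty β
  · exact (integrable_zero Ω ℝ μ).congr (ae_of_all _ fun ω => isEmptyElim (J ω))
  obtain ⟨b, hb⟩ := Finite.exists_max fun b => ‖g b‖
  exact .of_bound ((measurable_of_finite g).comp hJ).aestronglyMeasurable _
    (ae_of_all _ fun ω => hb (J ω))

theorem integral_card_filter [IsFiniteMeasure μ] {P : Type*} [Fintype P] {A : Ω → P → Prop}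
    [∀ ω, DecidablePred (A ω)] (hA : ∀ q, MeasurableSet {ω | A ω q}) :
    ∫ ω, (#{q | A ω q} : ℝ) ∂μ = ∑ q, μ.real {ω | A ω q} := by
  have h : ∀ ω, (#{q | A ω q} : ℝ) = ∑ q, {ω | A ω q}.indicator 1 ω := by
    intro ω
    rw [card_filter]
    push_cast
    exact sum_congr rfl fun q _ => by by_cases h : A ω q <;> simp [h]
  simp_rw [h]
  rw [integral_finsetSum _ fun q _ => (integrable_const 1).indicator (hA q)]
  exact sum_congr rfl fun q _ => integral_indicator_one (hA q)

theorem measureReal_forall_eq_iff_mem [IsProbabilityMeasure μ] {ι α : Type*} [Fintype ι]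
    [MeasurableSpace α] [MeasurableSingletonClass α] {X : ι → Ω → α}
    (hX : ∀ i, Measurable (X i)) (hind : iIndepFun X μ) {c : α} {p : ℝ}
    (hp : ∀ i, μ.real {ω | X i ω = c} = p) (T : Finset ι) :
    μ.real {ω | ∀ i, X i ω = c ↔ i ∈ T} = p ^ #T * (1 - p) ^ (Fintype.card ι - #T) := by
  classical
  let sets : ι → Set α := fun i => if i ∈ T then {c} else {c}ᶜ
  have hsets : {ω | ∀ i, X i ω = c ↔ i ∈ T} = ⋂ i ∈ (univ : Finset ι), X i ⁻¹' sets i := by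
    ext ω
    simp only [Set.mem_ofPred_eq, mem_univ, Set.iInter_true, Set.mem_iInter, Set.mem_preimage, sets]
    refine forall_congr' fun i => ?_
    by_cases hi : i ∈ T <;> simp [hi]
  have hfactor : ∀ i, μ.real (X i ⁻¹' sets i) = if i ∈ T then p else 1 - p := by
    intro i
    by_cases hi : i ∈ T
    · simp only [sets, hi, if_true]
      exact hp i
    · simp only [sets, hi, if_false, Set.preimage_compl]
      rw [probReal_compl_eq_one_sub (hX i (measurableSet_singleton c))]
      exact congrArg (1 - ·) (hp i)
  have hmeas : ∀ i ∈ (univ : Finset ι), MeasurableSet (sets i) := fun i _ => by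
    by_cases hi : i ∈ T <;> simp [sets, hi]
  rw [hsets, measureReal_def, hind.measure_inter_preimage_eq_mul _ hmeas, ENNReal.toReal_prod]
  simp_rw [← measureReal_def, hfactor]
  rw [prod_ite, prod_const, prod_const]
  simp [filter_not, card_sdiff]

end Probability

section RandomPlacement

variable {Ω : Type*} [MeasurableSpace Ω] {μ : Measure Ω}
  {ι ν G α : Type*} [Fintype ι] [DecidableEq ι] [Fintype ν] [Fintype G]
  [Fintype α] [DecidableEq α] [MeasurableSpace α] [MeasurableSingletonClass α]
  {U : ι × ν × G → Ω → α}

theorem integral_exactCount [IsProbabilityMeasure μ] (hU : ∀ i, Measurable (U i))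
    (hind : iIndepFun U μ) {p : ℝ} (hp : ∀ i a, μ.real {ω | U i ω = a} = p) (n : ν) (T : Finset ι) :
    ∫ ω, (exactCount (fun i => U i ω) n T : ℝ) ∂μ =
      Fintype.card G * Fintype.card α * (p ^ #T * (1 - p) ^ (Fintype.card ι - #T)) := by
  unfold exactCount
  have hmeas (q : G × α) : MeasurableSet {ω | ∀ j, U (j, n, q.1) ω = q.2 ↔ j ∈ T} :=
    measurable_pi_lambda _ hU
      (Set.to_countable {u : ι × ν × G → α | ∀ j, u (j, n, q.1) = q.2 ↔ j ∈ T}).measurableSet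
  rw [integral_card_filter hmeas]
  have hinj (g : G) : Function.Injective fun j : ι => (j, n, g) := fun _ _ h => congrArg Prod.fst h
  rw [sum_congr rfl fun q _ => measureReal_forall_eq_iff_mem (fun j => hU _)
    (hind.precomp (hinj q.1)) (fun j => hp _ q.2) T]
  simp [card_univ, mul_assoc]

theorem integral_exactCount_mul_exactCount (hU : ∀ i, Measurable (U i)) (hind : iIndepFun U μ)
    {n n' : ν} (hn : n ≠ n') (T T' : Finset ι) :
    ∫ ω, (exactCount (fun i => U i ω) n T : ℝ) * exactCount (fun i => U i ω) n' T' ∂μ =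
      (∫ ω, (exactCount (fun i => U i ω) n T : ℝ) ∂μ) *
        ∫ ω, (exactCount (fun i => U i ω) n' T' : ℝ) ∂μ := by
  classical
  let files (n : ν) : Finset (ι × ν × G) := {i | i.2.1 = n}
  let count (n : ν) (T : Finset ι) (y : files n → α) : ℝ :=
    #{q : G × α | ∀ j, y ⟨(j, n, q.1), by simp [files]⟩ = q.2 ↔ j ∈ T}
  have hdisj : Disjoint (files n) (files n') :=
    disjoint_filter.mpr fun i _ h h' => hn (h.symm.trans h')
  have hmeas (n : ν) : Measurable fun ω (i : files n) => U i ω :=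
    measurable_pi_lambda _ fun i => hU i
  exact ((hind.indepFun_finset _ _ hdisj hU).comp (measurable_of_finite (count n T))
    (measurable_of_finite (count n' T'))).integral_fun_mul_eq_mul_integral
    ((measurable_of_finite _).comp (hmeas n)).aestronglyMeasurable
    ((measurable_of_finite _).comp (hmeas n')).aestronglyMeasurable

theorem integral_pairSum [IsProbabilityMeasure μ] (hU : ∀ i, Measurable (U i))
    (hind : iIndepFun U μ) {p : ℝ} (hp : ∀ i a, μ.real {ω | U i ω = a} = p) {d : ι → ν}
    (hd : Function.Injective d) :
    ∫ ω, pairSum (fun i => U i ω) d ∂μ =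
      (Fintype.card G * Fintype.card α) ^ 2 * (Fintype.card ι * (Fintype.card ι - 1) : ℕ) *
        (p ^ 2 * (1 - p) ^ 2 * (p ^ 2 + (1 - p) ^ 2) ^ (Fintype.card ι - 2)) := by
  have hint (S : Finset ι) (k k' : ι) : Integrable (fun ω =>
      (exactCount (fun i => U i ω) (d k) (S.erase k) : ℝ) *
        exactCount (fun i => U i ω) (d k') (S.erase k')) μ :=
    integrable_comp_of_finite (measurable_pi_lambda _ hU)
      fun u => (exactCount u (d k) (S.erase k) : ℝ) * exactCount u (d k') (S.erase k')
  have hterm (S : Finset ι) (k : ι) (hk : k ∈ S) (k' : ι) (hk' : k' ∈ S.erase k) :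
      ∫ ω, (exactCount (fun i => U i ω) (d k) (S.erase k) : ℝ) *
        exactCount (fun i => U i ω) (d k') (S.erase k') ∂μ =
      (Fintype.card G * Fintype.card α) ^ 2 *
        ((p ^ 2) ^ (#S - 1) * ((1 - p) ^ 2) ^ (Fintype.card ι - (#S - 1))) := by
    rw [integral_exactCount_mul_exactCount hU hind (hd.ne (mem_erase.mp hk').1.symm),
      integral_exactCount hU hind hp, integral_exactCount hU hind hp,
      card_erase_of_mem hk, card_erase_of_mem (mem_of_mem_erase hk')]
    generalize 1 - p = q
    ring
  unfold pairSum
  rw [integral_finsetSum _ fun S _ => integrable_finsetSum _ fun k _ =>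
      integrable_finsetSum _ fun k' _ => hint S k k',
    sum_congr rfl fun S _ => integral_finsetSum _ fun k _ =>
      integrable_finsetSum _ fun k' _ => hint S k k',
    sum_congr rfl fun S _ => sum_congr rfl fun k _ =>
      integral_finsetSum _ fun k' _ => hint S k k']
  calc ∑ S : Finset ι, ∑ k ∈ S, ∑ k' ∈ S.erase k, _
      = ((Fintype.card G : ℝ) * Fintype.card α) ^ 2 * ∑ S : Finset ι, ∑ k ∈ S,
          ∑ _k' ∈ S.erase k, (p ^ 2) ^ (#S - 1) * ((1 - p) ^ 2) ^ (Fintype.card ι - (#S - 1)) := by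
        simp only [mul_sum]
        exact sum_congr rfl fun S _ => sum_congr rfl fun k hk => sum_congr rfl fun k' hk' =>
          hterm S k hk k' hk'
    _ = _ := by
        rw [sum_sum_sum_erase_pow]
        ring

theorem card_mul_one_sub_inv_sub_le_integral_greedyRate [IsProbabilityMeasure μ] [Nonempty G]
    [Nonempty α] (hU : ∀ i, Measurable (U i)) (d : ι → ν) :
    Fintype.card ι * (1 - 1 / Fintype.card α) -
        (∫ ω, pairSum (fun i => U i ω) d ∂μ) / (Fintype.card α * Fintype.card G) ≤
      ∫ ω, greedyRate (fun i => U i ω) d ∂μ := by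
  have hJ := measurable_pi_lambda _ hU
  have hpairSum := integrable_comp_of_finite (μ := μ) hJ fun u => pairSum u d
  calc _ = ∫ ω, (Fintype.card ι * (1 - 1 / Fintype.card α) -
        pairSum (fun i => U i ω) d / (Fintype.card α * Fintype.card G)) ∂μ := by
        rw [integral_sub (integrable_const _) (hpairSum.div_const _), integral_const, integral_div,
          probReal_univ, one_smul]
    _ ≤ _ := integral_mono ((integrable_const _).sub (hpairSum.div_const _))
        (integrable_comp_of_finite hJ fun u => greedyRate u d)
        fun ω => card_mul_one_sub_inv_sub_le_greedyRate (fun i => U i ω) d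

end RandomPlacement

theorem inv_mul_sq_mul_pow_le_exp {p : ℝ} (hp0 : 0 < p) (hp1 : p ≤ 1) (n : ℕ) :
    p⁻¹ * (p ^ 2 * (1 - p) ^ 2 * (p ^ 2 + (1 - p) ^ 2) ^ (n - 2)) ≤
      Real.exp (-2 * (p * (1 - p)) * (n - 1)) := by
  set t := p * (1 - p)
  have ht0 : 0 ≤ t := mul_nonneg hp0.le (by linarith)
  have ht : t ≤ 1 / 4 := by nlinarith [sq_nonneg (2 * p - 1)]
  have hexp_le : Real.exp (2 * t) ≤ 2 := by
    have h1 := Real.add_one_le_exp (-(2 * t))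
    have h2 : Real.exp (2 * t) * Real.exp (-(2 * t)) = 1 := by rw [← Real.exp_add]; simp
    nlinarith [Real.exp_pos (2 * t)]
  have hn : (n : ℝ) - 2 ≤ (n - 2 : ℕ) := by
    have : (n : ℝ) ≤ (n - 2 : ℕ) + 2 := by exact_mod_cast le_tsub_add
    linarith
  have hpow : (p ^ 2 + (1 - p) ^ 2) ^ (n - 2) ≤ Real.exp (2 * t) * Real.exp (-2 * t * (n - 1)) :=
    calc (p ^ 2 + (1 - p) ^ 2) ^ (n - 2) = (1 - 2 * t) ^ (n - 2) := by ring
      _ ≤ Real.exp (-(2 * t)) ^ (n - 2) :=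
        pow_le_pow_left₀ (by linarith) (by linarith [Real.add_one_le_exp (-(2 * t))]) _
      _ = Real.exp ((n - 2 : ℕ) * -(2 * t)) := (Real.exp_nat_mul _ _).symm
      _ ≤ Real.exp (2 * t) * Real.exp (-2 * t * (n - 1)) := by
        rw [← Real.exp_add]
        exact Real.exp_le_exp.mpr (by nlinarith)
  have hcoef : p⁻¹ * (p ^ 2 * (1 - p) ^ 2) * Real.exp (2 * t) ≤ 1 := by
    have : p⁻¹ * (p ^ 2 * (1 - p) ^ 2) = t * (1 - p) := by field_simp; ring
    have h1 : t * (1 - p) ≤ 1 / 4 := by nlinarith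
    rw [this]
    nlinarith [mul_le_mul h1 hexp_le (Real.exp_pos _).le (by norm_num)]
  calc p⁻¹ * (p ^ 2 * (1 - p) ^ 2 * (p ^ 2 + (1 - p) ^ 2) ^ (n - 2))
      ≤ p⁻¹ * (p ^ 2 * (1 - p) ^ 2) * (Real.exp (2 * t) * Real.exp (-2 * t * (n - 1))) := by
        rw [← mul_assoc]; gcongr
    _ ≤ Real.exp (-2 * t * (n - 1)) := by nlinarith [Real.exp_pos (-2 * t * (n - 1))]

theorem stmt0_general
    {Ω : Type*} [MeasurableSpace Ω] (μ : Measure Ω) [IsProbabilityMeasure μ]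
    (K N m F' : ℕ)
    (hF' : 0 < F')
    (hm2 : 2 ≤ m) (hKm : m ≤ K)
    (U : Fin K × Fin N × Fin F' → Ω → Fin m)
    (hU_meas : ∀ i, Measurable (U i))
    (hU_indep : iIndepFun U μ)
    (hU_unif : ∀ i (f : Fin m), μ {ω | U i ω = f} = ((m : ℝ≥0∞))⁻¹)
    (d : Fin K → Fin N) (hd : Function.Injective d)
    (V : Ω → Finset (Fin K) → Fin K → ℕ)
    (hV : ∀ ω S k, V ω S k =
      (Finset.univ.filter (fun p : Fin F' × Fin m =>
        ∀ j : Fin K, (U (j, d k, p.1) ω = p.2 ↔ j ∈ S.erase k))).card)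
    (R : Ω → ℝ)
    (hR : ∀ ω, R ω = (1 / ((m : ℝ) * (F' : ℝ))) *
      ∑ S ∈ Finset.univ.filter (fun S : Finset (Fin K) => S.Nonempty),
        ((S.sup (fun k => V ω S k) : ℕ) : ℝ)) :
    (K : ℝ) * (1 - 1 / (m : ℝ)) -
        (F' : ℝ) * (K : ℝ) ^ 2 *
          Real.exp (-2 * ((K : ℝ) / (m : ℝ)) * (1 - ((K : ℝ) / (m : ℝ)) / (K : ℝ)) *
            (1 - 1 / (K : ℝ)))
      ≤ ∫ ω, R ω ∂μ := by
  classical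
  have : Nonempty (Fin m) := ⟨⟨0, by omega⟩⟩
  have : Nonempty (Fin F') := ⟨⟨0, hF'⟩⟩
  have hRu : R = fun ω => greedyRate (fun i => U i ω) d := by
    ext ω
    simp [hR, hV, greedyRate, exactCount]
  have hp (i : Fin K × Fin N × Fin F') (a : Fin m) : μ.real {ω | U i ω = a} = (m : ℝ)⁻¹ := by
    simp [measureReal_def, hU_unif]
  have hlow := card_mul_one_sub_inv_sub_le_integral_greedyRate (μ := μ) hU_meas d
  rw [integral_pairSum hU_meas hU_indep hp hd, ← hRu] at hlow
  simp only [Fintype.card_fin] at hlow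
  have hnum := inv_mul_sq_mul_pow_le_exp (p := (m : ℝ)⁻¹) (by positivity)
    (inv_le_one_of_one_le₀ (by exact_mod_cast (by omega : 1 ≤ m))) K
  rw [inv_inv] at hnum
  have hpairs : ((K * (K - 1) : ℕ) : ℝ) ≤ (K : ℝ) ^ 2 := by
    rw [sq]; exact_mod_cast Nat.mul_le_mul_left K (Nat.sub_le K 1)
  have hexp : -2 * ((K : ℝ) / m) * (1 - ((K : ℝ) / m) / K) * (1 - 1 / K) =
      -2 * ((m : ℝ)⁻¹ * (1 - (m : ℝ)⁻¹)) * (K - 1) := by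
    have : (K : ℝ) ≠ 0 := Nat.cast_ne_zero.mpr (by omega)
    field_simp
  set X := (m : ℝ)⁻¹ ^ 2 * (1 - (m : ℝ)⁻¹) ^ 2 * ((m : ℝ)⁻¹ ^ 2 + (1 - (m : ℝ)⁻¹) ^ 2) ^ (K - 2)
  calc _ ≤ (K : ℝ) * (1 - 1 / m) - F' * ((K * (K - 1) : ℕ) : ℝ) * (m * X) := by
        rw [hexp]; gcongr
    _ ≤ ∫ ω, R ω ∂μ := by convert hlow using 2; field_simp

/-- Coded caching with `K` users, `N > K` files, cache size `M` files
(`0 < M ≤ N`), `m = ⌈N/M⌉ ≥ 2`, each file split into `F' ≥ 1` groups of `m` packets each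
(`F = m·F'`), under the *new placement*: an i.i.d. family `U (k,n,g)` uniform on `Fin m`,
where packet `f` of group `g` of file `n` is stored in cache `k` iff `U (k,n,g) = f`.
For an injective demand vector `d` and nonempty `S ⊆ [K]`, `V ω S k` counts the packets of
file `d k` stored in exactly the caches of `S \ {k}`, and the greedy clique-cover rate is
`R = (1/(m·F')) · ∑_{S ≠ ∅} max_{k ∈ S} V ω S k`.
If `K ≥ m` (so `t := K/m` satisfies `1 ≤ t ≤ K`), then
`E[R] ≥ K·(1 − 1/m) − F'·K²·exp(−2t·(1 − t/K)·(1 − 1/K))`. -/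
theorem stmt0
    {Ω : Type*} [MeasurableSpace Ω] (μ : Measure Ω) [IsProbabilityMeasure μ]
    (K N m F' : ℕ) (M : ℝ)
    (hM : 0 < M) (hMN : M ≤ (N : ℝ)) (hNK : K < N) (hF' : 0 < F')
    (hm : m = ⌈(N : ℝ) / M⌉₊) (hm2 : 2 ≤ m) (hKm : m ≤ K)
    (U : Fin K × Fin N × Fin F' → Ω → Fin m)
    (hU_meas : ∀ i, Measurable (U i))
    (hU_indep : iIndepFun U μ)
    (hU_unif : ∀ i (f : Fin m), μ {ω | U i ω = f} = ((m : ℝ≥0∞))⁻¹)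
    (d : Fin K → Fin N) (hd : Function.Injective d)
    (V : Ω → Finset (Fin K) → Fin K → ℕ)
    (hV : ∀ ω S k, V ω S k =
      (Finset.univ.filter (fun p : Fin F' × Fin m =>
        ∀ j : Fin K, (U (j, d k, p.1) ω = p.2 ↔ j ∈ S.erase k))).card)
    (R : Ω → ℝ)
    (hR : ∀ ω, R ω = (1 / ((m : ℝ) * (F' : ℝ))) *
      ∑ S ∈ Finset.univ.filter (fun S : Finset (Fin K) => S.Nonempty),
        ((S.sup (fun k => V ω S k) : ℕ) : ℝ)) :
    (K : ℝ) * (1 - 1 / (m : ℝ)) -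
        (F' : ℝ) * (K : ℝ) ^ 2 *
          Real.exp (-2 * ((K : ℝ) / (m : ℝ)) * (1 - ((K : ℝ) / (m : ℝ)) / (K : ℝ)) *
            (1 - 1 / (K : ℝ)))
      ≤ ∫ ω, R ω ∂μ :=
  stmt0_general μ K N m F' hF' hm2 hKm U hU_meas hU_indep hU_unif d hd V hV R hR
end

section
/- Let g be an integer with 2 < g ≤ K and set t := K·M/N > 0. If F < (g/(2·e·t))·(N/M)^{g−2}, then under an independent symmetric placement with distinct demands the probability that a g-clique of the induced side-information problem exists is strictly less than 1/4. -/
/-!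
A `g`-clique is witnessed by a `g`-set of users together with one packet per user, and for a
fixed witness the `g(g-1)` required cache indicators are distinct (this is where distinct demands
enter), hence independent. Sorting the users, the union bound gives
`P ≤ C(K,g) F^g p^{g(g-1)} ≤ (eK/g)^g (F p^{g-1})^g`, with `p = M/N`, and the hypothesis on `F`
says exactly `F p^{g-1} < g/(2eK)`. So `P ≤ 2^{-g} ≤ 1/8`.
-/

open MeasureTheory ProbabilityTheory Finset Function
open scoped ENNReal

lemma Nat.choose_le_exp_mul_div_pow (n r : ℕ) : (n.choose r : ℝ) ≤ (Real.exp 1 * n / r) ^ r := by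
  have hr : (0 : ℝ) < (r : ℝ) ^ r := by exact_mod_cast Nat.pow_self_pos
  have hfac : (r : ℝ) ^ r / r.factorial ≤ Real.exp r :=
    Real.pow_div_factorial_le_exp _ r.cast_nonneg r
  calc (n.choose r : ℝ) ≤ (n : ℝ) ^ r / r.factorial := Nat.choose_le_pow_div r n
    _ = (n : ℝ) ^ r / (r : ℝ) ^ r * ((r : ℝ) ^ r / r.factorial) := by field_simp
    _ ≤ (n : ℝ) ^ r / (r : ℝ) ^ r * Real.exp r := by gcongr
    _ = (Real.exp 1 * n / r) ^ r := by rw [div_pow, mul_pow, Real.exp_one_pow]; ring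

lemma choose_mul_pow_mul_pow_lt_quarter {K F g : ℕ} {p : ℝ} (hp : 0 ≤ p) (hg : 2 < g)
    (hK : (K : ℝ) ≠ 0) (hFp : F * p ^ (g - 1) < g / (2 * Real.exp 1 * K)) :
    (K.choose g : ℝ) * F ^ g * p ^ (g * (g - 1)) < 1 / 4 :=
  calc (K.choose g : ℝ) * F ^ g * p ^ (g * (g - 1)) = K.choose g * (F * p ^ (g - 1)) ^ g := by
        rw [mul_pow, ← pow_mul, mul_comm (g - 1), mul_assoc]
    _ ≤ (Real.exp 1 * K / g) ^ g * (g / (2 * Real.exp 1 * K)) ^ g := by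
        gcongr
        exact Nat.choose_le_exp_mul_div_pow K g
    _ = (1 / 2) ^ g := by rw [← mul_pow]; congr 1; field_simp
    _ ≤ (1 / 2) ^ 3 := pow_le_pow_of_le_one (by norm_num) (by norm_num) hg
    _ < 1 / 4 := by norm_num

open Classical in
lemma card_filter_strictMono_le_choose (g : ℕ) (κ : Type*) [Fintype κ] [LinearOrder κ] :
    #{k : Fin g → κ | StrictMono k} ≤ (Fintype.card κ).choose g := by
  calc #{k : Fin g → κ | StrictMono k} ≤ #((univ : Finset κ).powersetCard g) := by
        refine card_le_card_of_injOn (fun k ↦ univ.image k) (fun k hk ↦ ?_) fun k₁ hk₁ k₂ hk₂ h ↦ ?_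
        · obtain ⟨-, hk⟩ := mem_filter.1 hk
          simp [mem_powersetCard, card_image_of_injective _ hk.injective]
        · rw [← (mem_filter.1 hk₁).2.range_inj (mem_filter.1 hk₂).2, ← Set.image_univ,
            ← Set.image_univ, ← coe_univ, ← coe_image, ← coe_image]
          exact congrArg _ h
    _ = (Fintype.card κ).choose g := by rw [card_powersetCard, card_univ]

lemma exists_perm_strictMono_comp {g : ℕ} {κ : Type*} [LinearOrder κ] {k : Fin g → κ}
    (hk : Injective k) : ∃ σ : Equiv.Perm (Fin g), StrictMono (k ∘ σ) :=
  ⟨Tuple.sort k, (Tuple.monotone_sort k).strictMono_of_injective (hk.comp (Tuple.sort k).injective)⟩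

lemma measure_forall_eq_true_eq_pow {Ω ι : Type*} [MeasurableSpace Ω] {μ : Measure Ω}
    {X : ι → Ω → Bool} (hX : iIndepFun X μ) {q : ℝ≥0∞} (hq : ∀ i, μ {ω | X i ω = true} = q)
    (T : Finset ι) : μ {ω | ∀ i ∈ T, X i ω = true} = q ^ #T := by
  have hT : {ω | ∀ i ∈ T, X i ω = true} = ⋂ i ∈ T, X i ⁻¹' {true} := by ext; simp
  rw [hT, hX.measure_inter_preimage_eq_mul T fun _ _ ↦ measurableSet_singleton true]
  exact prod_eq_pow_card fun i _ ↦ hq i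

section Clique

variable {Ω κ ν π : Type*} {g : ℕ}

def cliqueEvent (X : κ × ν × π → Ω → Bool) (d : κ → ν) (k : Fin g → κ) (f : Fin g → π) :
    Set Ω :=
  {ω | ∀ i j, i ≠ j → X (k j, d (k i), f i) ω = true}

lemma cliqueEvent_subset_comp (X : κ × ν × π → Ω → Bool) (d : κ → ν) (k : Fin g → κ)
    (f : Fin g → π) {σ : Fin g → Fin g} (hσ : Injective σ) :
    cliqueEvent X d k f ⊆ cliqueEvent X d (k ∘ σ) (f ∘ σ) :=
  fun _ hω _ _ hij ↦ hω _ _ (hσ.ne hij)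

variable [MeasurableSpace Ω] {μ : Measure Ω} {X : κ × ν × π → Ω → Bool} {q : ℝ≥0∞} {d : κ → ν}

lemma measure_cliqueEvent (hX : iIndepFun X μ) (hq : ∀ i, μ {ω | X i ω = true} = q)
    (hd : Injective d) {k : Fin g → κ} (hk : Injective k) (f : Fin g → π) :
    μ (cliqueEvent X d k f) = q ^ (g * (g - 1)) := by
  classical
  let φ : Fin g × Fin g → κ × ν × π := fun ij ↦ (k ij.2, d (k ij.1), f ij.1)
  have hφ : Set.InjOn φ (univ : Finset (Fin g)).offDiag := by
    rintro ⟨i, j⟩ - ⟨i', j'⟩ - h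
    simp only [φ, Prod.mk.injEq] at h
    rw [hk (hd h.2.1), hk h.1]
  have hE : cliqueEvent X d k f = {ω | ∀ t ∈ univ.offDiag.image φ, X t ω = true} := by
    ext ω
    simp only [cliqueEvent, Set.mem_ofPred_eq, forall_mem_image, mem_offDiag, mem_univ, true_and,
      Prod.forall, φ]
  rw [hE, measure_forall_eq_true_eq_pow hX hq, card_image_of_injOn hφ, offDiag_card, card_univ,
    Fintype.card_fin, Nat.mul_sub_one]

lemma measure_exists_clique_le [Fintype κ] [LinearOrder κ] [Fintype π] (hX : iIndepFun X μ)
    (hq : ∀ i, μ {ω | X i ω = true} = q) (hd : Injective d) :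
    μ {ω | ∃ k : Fin g → κ, Injective k ∧ ∃ f : Fin g → π, ω ∈ cliqueEvent X d k f} ≤
      (Fintype.card κ).choose g * Fintype.card π ^ g * q ^ (g * (g - 1)) := by
  classical
  let S : Finset (Fin g → κ) := {k | StrictMono k}
  have hcover : {ω | ∃ k : Fin g → κ, Injective k ∧ ∃ f : Fin g → π, ω ∈ cliqueEvent X d k f} ⊆
      ⋃ kf ∈ S ×ˢ (univ : Finset (Fin g → π)), cliqueEvent X d kf.1 kf.2 := by
    rintro ω ⟨k, hk, f, hω⟩
    obtain ⟨σ, hσ⟩ := exists_perm_strictMono_comp hk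
    exact Set.mem_iUnion₂.2 ⟨(k ∘ σ, f ∘ σ), by simp [S, hσ],
      cliqueEvent_subset_comp X d k f σ.injective hω⟩
  calc _ ≤ μ (⋃ kf ∈ S ×ˢ (univ : Finset (Fin g → π)), cliqueEvent X d kf.1 kf.2) :=
        measure_mono hcover
    _ ≤ ∑ kf ∈ S ×ˢ (univ : Finset (Fin g → π)), μ (cliqueEvent X d kf.1 kf.2) :=
        measure_biUnion_finset_le _ _
    _ = #S * Fintype.card π ^ g * q ^ (g * (g - 1)) := by
        rw [sum_congr rfl fun kf hkf ↦ measure_cliqueEvent hX hq hd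
          (mem_filter.1 (mem_product.1 hkf).1).2.injective kf.2]
        simp [card_product, mul_assoc]
    _ ≤ _ := by gcongr; exact_mod_cast card_filter_strictMono_le_choose g κ

end Clique

theorem stmt5_general
    {Ω : Type*} [MeasurableSpace Ω] (μ : Measure Ω)
    (K N F : ℕ) (M : ℝ)
    (hM : 0 < M) (hMN : M ≤ (N : ℝ))
    (X : Fin K × Fin N × Fin F → Ω → Bool)
    (hX_indep : iIndepFun X μ)
    (hX_bern : ∀ i, μ {ω | X i ω = true} = ENNReal.ofReal (M / (N : ℝ)))
    (d : Fin K → Fin N) (hd : Function.Injective d)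
    (g : ℕ) (hg : 2 < g) (hgK : g ≤ K)
    (hF : (F : ℝ) < ((g : ℝ) / (2 * Real.exp 1 * ((K : ℝ) * M / (N : ℝ)))) *
      ((N : ℝ) / M) ^ (g - 2)) :
    μ {ω | ∃ k : Fin g → Fin K, Function.Injective k ∧
        ∃ f : Fin g → Fin F, ∀ i j : Fin g, i ≠ j → X (k j, d (k i), f i) ω = true} <
      1 / 4 := by
  set p := M / N
  have hp : 0 < p := div_pos hM (hM.trans_le hMN)
  have hK : (0 : ℝ) < K := mod_cast (by omega : 0 < K)
  have hFp : (F : ℝ) * p ^ (g - 1) < g / (2 * Real.exp 1 * K) := by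
    have hNM : (N : ℝ) / M = p⁻¹ := (inv_div M N).symm
    rw [show (K : ℝ) * M / N = K * p by ring, hNM] at hF
    calc (F : ℝ) * p ^ (g - 1) = F * p ^ (g - 2) * p := by
          rw [mul_assoc, ← pow_succ, show g - 2 + 1 = g - 1 by omega]
      _ < g / (2 * Real.exp 1 * (K * p)) * p⁻¹ ^ (g - 2) * p ^ (g - 2) * p := by gcongr
      _ = g / (2 * Real.exp 1 * (K * p)) * p := by
          rw [mul_assoc _ (p⁻¹ ^ _), inv_pow, inv_mul_cancel₀ (by positivity), mul_one]
      _ = g / (2 * Real.exp 1 * K) := by field_simp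
  have hbound := choose_mul_pow_mul_pow_lt_quarter hp.le hg hK.ne' hFp
  calc _ ≤ (K.choose g : ℝ≥0∞) * F ^ g * ENNReal.ofReal p ^ (g * (g - 1)) := by
        simpa [cliqueEvent] using measure_exists_clique_le (g := g) hX_indep hX_bern hd
    _ = ENNReal.ofReal ((K.choose g : ℝ) * F ^ g * p ^ (g * (g - 1))) := by
        rw [ENNReal.ofReal_mul (by positivity), ENNReal.ofReal_mul (by positivity),
          ENNReal.ofReal_pow hp.le, ENNReal.ofReal_pow (by positivity), ENNReal.ofReal_natCast,
          ENNReal.ofReal_natCast]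
    _ < 1 / 4 := by
        rw [ENNReal.ofReal_lt_iff_lt_toReal (by positivity) (by simp)]
        simpa using hbound

/-- Same setting as Statement 4 (independent symmetric placement with
i.i.d. Bernoulli(`M/N`) indicators, injective demands).  Let `2 < g ≤ K` and
`t := K·M/N > 0`.  If `F < (g/(2·e·t))·(N/M)^(g−2)`, then the probability that a
`g`-clique of the induced side-information problem exists is strictly less than `1/4`. -/
theorem stmt5
    {Ω : Type*} [MeasurableSpace Ω] (μ : Measure Ω) [IsProbabilityMeasure μ]
    (K N F : ℕ) (M : ℝ)
    (hM : 0 < M) (hMN : M ≤ (N : ℝ)) (hNK : K < N)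
    (X : Fin K × Fin N × Fin F → Ω → Bool)
    (hX_meas : ∀ i, Measurable (X i))
    (hX_indep : iIndepFun X μ)
    (hX_bern : ∀ i, μ {ω | X i ω = true} = ENNReal.ofReal (M / (N : ℝ)))
    (d : Fin K → Fin N) (hd : Function.Injective d)
    (g : ℕ) (hg : 2 < g) (hgK : g ≤ K)
    (ht : 0 < (K : ℝ) * M / (N : ℝ))
    (hF : (F : ℝ) < ((g : ℝ) / (2 * Real.exp 1 * ((K : ℝ) * M / (N : ℝ)))) *
      ((N : ℝ) / M) ^ (g - 2)) :
    μ {ω | ∃ k : Fin g → Fin K, Function.Injective k ∧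
        ∃ f : Fin g → Fin F, ∀ i j : Fin g, i ≠ j → X (k j, d (k i), f i) ω = true} <
      1 / 4 :=
  stmt5_general μ K N F M hM hMN X hX_indep hX_bern d hd g hg hgK hF
end

section
/- Under the new placement with an injective demand vector d, let R := cc/F be the normalized optimal clique-cover rate of the random side-information graph, where F = m·F'. Then for every ε > 0, P( |R − E[R]| ≥ ε·E[R] ) ≤ 2·exp( −2·ε²·(E[R])²·F / (K·m²) ). -/
/-
Write `x (k, n, g) ∈ Fin m` for the packet of group `g` of file `n` that user `k` caches. If `x`
is changed only at the coordinates `(·, d j, g)` (one group of the file demanded by user `j`),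
every vertex outside `{(j, (g, f))}` keeps its adjacencies, so an optimal clique cover of the
old graph, cut down to those vertices, together with the at most `m - 1` singletons `(j, (g, f))`
covers the new graph. By injectivity of `d`, these `K·F'` blocks are disjoint, so `R` has bounded
differences `(m - 1)/(m F')` with respect to independent blocks of uniform coordinates, and
McDiarmid's inequality gives, with `E = 𝔼[R]`, the tail bound `2 exp(-ε²E²m²F'/(2K(m - 1)²))`.
Since `m³ ≥ 4(m - 1)²`, this is at most the claimed `2 exp(-2ε²E²F'/(Km))`.
-/

open MeasureTheory ProbabilityTheory Finset
open scoped ENNReal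

/-- The clique-cover number of a simple graph `G`: the minimum number `n` of cliques
(sets of pairwise adjacent vertices) whose union is the whole vertex set. -/
noncomputable def cliqueCoverNumber {V : Type*} (G : SimpleGraph V) : ℕ :=
  sInf {n : ℕ | ∃ c : Fin n → Set V, (∀ i, G.IsClique (c i)) ∧ ∀ v, ∃ i, v ∈ c i}

/-- The side-information graph of a caching configuration.  `stored k n p` means that
packet `p` of file `n` is stored in cache `k`, and `d` is the demand vector.  Vertices
are pairs `(k, p)` such that packet `p` of file `d k` is *not* stored in cache `k`;
distinct vertices `(k, p)` and `(j, p')` are adjacent iff packet `p'` of file `d j` is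
stored in cache `k` and packet `p` of file `d k` is stored in cache `j`. -/
def sideInfoGraph {User File Packet : Type*} (stored : User → File → Packet → Prop)
    (d : User → File) :
    SimpleGraph {v : User × Packet // ¬ stored v.1 (d v.1) v.2} where
  Adj v w := v ≠ w ∧ stored v.1.1 (d w.1.1) w.1.2 ∧ stored w.1.1 (d v.1.1) v.1.2
  symm := ⟨fun v w ⟨hne, h1, h2⟩ => ⟨hne.symm, h2, h1⟩⟩
  loopless := ⟨fun v ⟨hne, _, _⟩ => hne rfl⟩

open scoped BigOperators

section CliqueCover

variable {V : Type*} (G : SimpleGraph V)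

lemma cliqueCoverNumber_le_natCard {T : Type*} [Finite T] (c : T → Set V)
    (hc : ∀ i, G.IsClique (c i)) (hcov : ∀ v, ∃ i, v ∈ c i) :
    cliqueCoverNumber G ≤ Nat.card T := by
  have e := Finite.equivFin T
  refine Nat.sInf_le ⟨c ∘ e.symm, fun i => hc _, fun v => ?_⟩
  obtain ⟨i, hi⟩ := hcov v
  exact ⟨e i, by simpa using hi⟩

lemma exists_cliqueCover [Finite V] :
    ∃ c : Fin (cliqueCoverNumber G) → Set V, (∀ i, G.IsClique (c i)) ∧ ∀ v, ∃ i, v ∈ c i := by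
  have e := Finite.equivFin V
  have hsingletons :
      {n | ∃ c : Fin n → Set V, (∀ i, G.IsClique (c i)) ∧ ∀ v, ∃ i, v ∈ c i}.Nonempty :=
    ⟨Nat.card V, fun i => {e.symm i}, fun _ => G.isClique_singleton _, fun v => ⟨e v, by simp⟩⟩
  exact Nat.sInf_mem hsingletons

end CliqueCover

theorem cliqueCoverNumber_sideInfoGraph_le_add {User File Packet : Type*} [Finite User]
    [Finite Packet] {s s' : User → File → Packet → Prop} {d : User → File} (j : User)
    (P : Set Packet) (hss' : ∀ k j' p, (j' ≠ j ∨ p ∉ P) → (s k (d j') p ↔ s' k (d j') p)) :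
    cliqueCoverNumber (sideInfoGraph s d) ≤
      cliqueCoverNumber (sideInfoGraph s' d) + {p ∈ P | ¬ s j (d j) p}.ncard := by
  obtain ⟨c, hc, hcov⟩ := exists_cliqueCover (sideInfoGraph s' d)
  let block (v : User × Packet) : Prop := v.1 = j ∧ v.2 ∈ P
  have hblock : ∀ k v, ¬ block v → (s k (d v.1) v.2 ↔ s' k (d v.1) v.2) := fun k v hv =>
    hss' k v.1 v.2 (by tauto)
  let c' : Fin (cliqueCoverNumber (sideInfoGraph s' d)) ⊕ {p ∈ P | ¬ s j (d j) p} →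
      Set {v : User × Packet // ¬ s v.1 (d v.1) v.2}
    | .inl i => {v | ∃ hv : ¬ block v.1, ⟨v.1, fun h => v.2 ((hblock _ _ hv).mpr h)⟩ ∈ c i}
    | .inr p => {v | v.1 = (j, p.1)}
  have hc' : ∀ i, (sideInfoGraph s d).IsClique (c' i) := by
    rintro (i | p)
    · rintro v ⟨hv, hvc⟩ w ⟨hw, hwc⟩ hvw
      obtain ⟨-, hvw₁, hvw₂⟩ := hc i hvc hwc fun h => hvw (Subtype.ext (Subtype.mk.inj h))
      exact ⟨hvw, (hblock _ _ hw).mpr hvw₁, (hblock _ _ hv).mpr hvw₂⟩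
    · rintro v hv w hw hvw
      exact absurd (Subtype.ext (hv.trans hw.symm)) hvw
  have hcov' : ∀ v, ∃ i, v ∈ c' i := by
    rintro ⟨⟨k, p⟩, hkp⟩
    by_cases hv : block (k, p)
    · obtain ⟨rfl, hp⟩ := hv
      exact ⟨.inr ⟨p, hp, hkp⟩, rfl⟩
    · obtain ⟨i, hi⟩ := hcov ⟨(k, p), fun h => hkp ((hblock _ _ hv).mpr h)⟩
      exact ⟨.inl i, hv, hi⟩
  have := cliqueCoverNumber_le_natCard _ c' hc' hcov'
  rwa [Nat.card_sum, Nat.card_eq_fintype_card, Fintype.card_fin, Nat.card_coe_set_eq] at this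

section Placement

variable {κ ν γ : Type*} {m : ℕ}

def placementGraph (d : κ → ν) (x : κ × ν × γ → Fin m) :
    SimpleGraph {v : κ × (γ × Fin m) // ¬ x (v.1, d v.1, v.2.1) = v.2.2} :=
  sideInfoGraph (fun k n (p : γ × Fin m) => x (k, n, p.1) = p.2) d

/-- The coordinate `(k, n, g)` of a placement lies in the block `(j, g)` of the user `j` who
demands file `n`; coordinates of files nobody demands go to an arbitrary block. -/
noncomputable def demandBlock [Nonempty κ] (d : κ → ν) (i : κ × ν × γ) : κ × γ :=
  (Function.invFun d i.2.1, i.2.2)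

lemma cliqueCoverNumber_placementGraph_le_add [Finite κ] [Finite γ] [Nonempty κ] {d : κ → ν}
    (hd : Function.Injective d) {x y : κ × ν × γ → Fin m} {b : κ × γ}
    (hxy : ∀ i, demandBlock d i ≠ b → x i = y i) :
    cliqueCoverNumber (placementGraph d x) ≤ cliqueCoverNumber (placementGraph d y) + (m - 1) := by
  have hagree : ∀ k j (p : γ × Fin m), (j ≠ b.1 ∨ p ∉ {p | p.1 = b.2}) →
      (x (k, d j, p.1) = p.2 ↔ y (k, d j, p.1) = p.2) := fun k j p hjp => by
    rw [hxy (k, d j, p.1) fun h => ?_]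
    simp only [demandBlock, Function.leftInverse_invFun hd j, Prod.ext_iff] at h
    tauto
  refine (cliqueCoverNumber_sideInfoGraph_le_add b.1 _ hagree).trans (Nat.add_le_add_left ?_ _)
  calc {p ∈ {p : γ × Fin m | p.1 = b.2} | ¬ x (b.1, d b.1, p.1) = p.2}.ncard
      ≤ (Prod.mk b.2 '' (univ.erase (x (b.1, d b.1, b.2)) : Set (Fin m))).ncard := by
        refine Set.ncard_le_ncard (fun p ⟨hp, hpx⟩ => ⟨p.2, ?_, ?_⟩) (Set.toFinite _)
        · simpa [eq_comm, show p.1 = b.2 from hp] using hpx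
        · rw [← hp]
    _ ≤ m - 1 := by
        refine (Set.ncard_image_le (Set.toFinite _)).trans ?_
        rw [Set.ncard_coe_finset, card_erase_of_mem (mem_univ _), card_univ, Fintype.card_fin]

end Placement

lemma exp_le_cosh_add_mul_sinh_div {u a : ℝ} (h : |u| ≤ a) :
    Real.exp u ≤ Real.cosh a + u * (Real.sinh a / a) := by
  rcases (abs_nonneg u).trans h |>.eq_or_lt with rfl | ha
  · simp [abs_nonpos_iff.mp h]
  -- `exp` lies below its chord over `[-a, a]`
  have hu := abs_le.mp h
  have hw₁ : 0 ≤ (a - u) / (2 * a) := div_nonneg (by linarith) (by linarith)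
  have hw₂ : 0 ≤ (a + u) / (2 * a) := div_nonneg (by linarith) (by linarith)
  have hw : (a - u) / (2 * a) + (a + u) / (2 * a) = 1 := by field_simp; ring
  have hchord := convexOn_exp.2 (Set.mem_univ (-a)) (Set.mem_univ a) hw₁ hw₂ hw
  simp only [smul_eq_mul] at hchord
  have hpt : (a - u) / (2 * a) * -a + (a + u) / (2 * a) * a = u := by field_simp; ring
  rw [hpt] at hchord
  refine hchord.trans_eq ?_
  rw [Real.cosh_eq, Real.sinh_eq]
  field_simp
  ring

lemma expect_exp_mul_le_of_abs_le {X : Type*} [Fintype X] [Nonempty X] {Z : X → ℝ} {c : ℝ}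
    (hZ₀ : 𝔼 x, Z x = 0) (hZ : ∀ x, |Z x| ≤ c) (t : ℝ) :
    𝔼 x, Real.exp (t * Z x) ≤ Real.exp (t ^ 2 * c ^ 2 / 2) := by
  have htZ : ∀ x, |t * Z x| ≤ |t| * c := fun x => by
    rw [abs_mul]; exact mul_le_mul_of_nonneg_left (hZ x) (abs_nonneg t)
  calc 𝔼 x, Real.exp (t * Z x)
      ≤ 𝔼 x, (Real.cosh (|t| * c) + t * Z x * (Real.sinh (|t| * c) / (|t| * c))) :=
        expect_le_expect fun x _ => exp_le_cosh_add_mul_sinh_div (htZ x)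
    _ = Real.cosh (|t| * c) := by
        rw [expect_add_distrib, Fintype.expect_const, ← expect_mul, ← mul_expect, hZ₀]; ring
    _ ≤ Real.exp ((|t| * c) ^ 2 / 2) := Real.cosh_le_exp_half_sq _
    _ = Real.exp (t ^ 2 * c ^ 2 / 2) := by rw [mul_pow, sq_abs]

lemma abs_expect_sub_expect_le {X : Type*} [Fintype X] [Nonempty X] {g h : X → ℝ} {c : ℝ}
    (hgh : ∀ x, |g x - h x| ≤ c) : |𝔼 x, g x - 𝔼 x, h x| ≤ c := by
  rw [← expect_sub_distrib]
  exact (abs_expect_le _ _).trans (expect_le univ_nonempty fun x _ => hgh x)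

def HasBoundedDifferences {ι J : Type*} {β : ι → Type*} (π : ι → J) (f : (∀ i, β i) → ℝ)
    (c : J → ℝ) : Prop :=
  ∀ j (x y : ∀ i, β i), (∀ i, π i ≠ j → x i = y i) → |f x - f y| ≤ c j

lemma expect_pi_fin_succ {n : ℕ} {β : Fin (n + 1) → Type*} [∀ i, Fintype (β i)]
    (g : (∀ i, β i) → ℝ) :
    𝔼 x, g x = 𝔼 y : (∀ i : Fin n, β i.succ), 𝔼 b : β 0, g (Fin.cons b y) := by
  rw [← Fintype.expect_equiv (Fin.consEquiv β) (fun p => g (Fin.cons p.1 p.2)) g fun _ => rfl,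
    ← univ_product_univ, expect_product' univ univ fun b y => g (Fin.cons b y), expect_comm]

theorem expect_exp_mul_sub_expect_le_of_pi_fin : ∀ {n : ℕ} {β : Fin n → Type*}
    [∀ i, Fintype (β i)] [∀ i, Nonempty (β i)] {f : (∀ i, β i) → ℝ} {c : Fin n → ℝ},
    HasBoundedDifferences id f c → ∀ t : ℝ,
    𝔼 x, Real.exp (t * (f x - 𝔼 z, f z)) ≤ Real.exp (t ^ 2 * (∑ j, c j ^ 2) / 2)
  | 0, β, _, _, f, c, _, t => by
    have : Unique (∀ i : Fin 0, β i) := Pi.uniqueOfIsEmpty β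
    simp
  | n + 1, β, _, _, f, c, hf, t => by
    -- average out the first coordinate
    set F : (∀ i : Fin n, β i.succ) → ℝ := fun y => 𝔼 b : β 0, f (Fin.cons b y)
    have hF_mean : 𝔼 z, f z = 𝔼 y, F y := expect_pi_fin_succ f
    have hF : HasBoundedDifferences id F (fun j => c j.succ) := fun j y y' hyy' =>
      abs_expect_sub_expect_le fun b => hf j.succ _ _ fun i hi => by
        cases i using Fin.cases with
        | zero => rfl
        | succ i => exact hyy' i fun h => hi (congrArg Fin.succ h)
    have hfiber : ∀ y, 𝔼 b : β 0, Real.exp (t * (f (Fin.cons b y) - F y))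
        ≤ Real.exp (t ^ 2 * c 0 ^ 2 / 2) := fun y => by
      refine expect_exp_mul_le_of_abs_le ?_ (fun b => ?_) t
      · rw [expect_sub_distrib, Fintype.expect_const, sub_self]
      · rw [← Fintype.expect_const (ι := β 0) (f (Fin.cons b y))]
        exact abs_expect_sub_expect_le fun b' => hf 0 _ _ fun i hi => by
          cases i using Fin.cases with
          | zero => exact absurd rfl hi
          | succ i => rfl
    calc 𝔼 x, Real.exp (t * (f x - 𝔼 z, f z))
        = 𝔼 y, Real.exp (t * (F y - 𝔼 z, F z)) *
            𝔼 b : β 0, Real.exp (t * (f (Fin.cons b y) - F y)) := by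
          rw [expect_pi_fin_succ, hF_mean]
          refine expect_congr rfl fun y _ => ?_
          rw [mul_expect]
          refine expect_congr rfl fun b _ => ?_
          rw [← Real.exp_add]
          ring_nf
      _ ≤ 𝔼 y, Real.exp (t * (F y - 𝔼 z, F z)) * Real.exp (t ^ 2 * c 0 ^ 2 / 2) :=
          expect_le_expect fun y _ => mul_le_mul_of_nonneg_left (hfiber y) (Real.exp_nonneg _)
      _ ≤ Real.exp (t ^ 2 * (∑ j : Fin n, c j.succ ^ 2) / 2) * Real.exp (t ^ 2 * c 0 ^ 2 / 2) := by
          rw [← expect_mul]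
          exact mul_le_mul_of_nonneg_right
            (expect_exp_mul_sub_expect_le_of_pi_fin hF t) (Real.exp_nonneg _)
      _ = Real.exp (t ^ 2 * (∑ j, c j ^ 2) / 2) := by
          rw [← Real.exp_add, Fin.sum_univ_succ]; ring_nf

theorem expect_exp_mul_sub_expect_le {ι J A : Type*} [Fintype ι] [DecidableEq ι] [Fintype J]
    [Fintype A] [Nonempty A] {π : ι → J} {f : (ι → A) → ℝ} {c : J → ℝ}
    (hf : HasBoundedDifferences π f c) (t : ℝ) :
    𝔼 x, Real.exp (t * (f x - 𝔼 z, f z)) ≤ Real.exp (t ^ 2 * (∑ j, c j ^ 2) / 2) := by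
  -- regroup the coordinates block by block, the blocks being enumerated by `Fin (card J)`
  let e := Fintype.equivFin J
  let E : (∀ j, ({i // e (π i) = j} → A)) ≃ (ι → A) :=
    (Equiv.piCurry fun j (_ : {i // e (π i) = j}) => A).symm.trans
      ((Equiv.sigmaFiberEquiv (e ∘ π)).arrowCongr (Equiv.refl A))
  have hfE : HasBoundedDifferences id (f ∘ E) (c ∘ e.symm) := fun j x y hxy =>
    hf (e.symm j) (E x) (E y) fun i hi => congrFun (hxy (e (π i)) fun h => hi (by simp [← h])) _
  have key := expect_exp_mul_sub_expect_le_of_pi_fin hfE t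
  rw [Fintype.expect_equiv E (f ∘ E) f fun _ => rfl] at key
  calc 𝔼 x, Real.exp (t * (f x - 𝔼 z, f z))
      = 𝔼 x, Real.exp (t * ((f ∘ E) x - 𝔼 z, f z)) :=
        (Fintype.expect_equiv E _ _ fun _ => rfl).symm
    _ ≤ Real.exp (t ^ 2 * (∑ j, (c ∘ e.symm) j ^ 2) / 2) := key
    _ = Real.exp (t ^ 2 * (∑ j, c j ^ 2) / 2) := by
        simp only [Function.comp_apply, e.symm.sum_comp fun j => c j ^ 2]

lemma card_ge_div_card_le_exp {X : Type*} [Fintype X] {g : X → ℝ} {S s : ℝ} (hS : 0 < S)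
    (hs : 0 ≤ s) (hg : ∀ t, 𝔼 x, Real.exp (t * g x) ≤ Real.exp (t ^ 2 * S / 2)) :
    (#{x | s ≤ g x} : ℝ) / Fintype.card X ≤ Real.exp (-s ^ 2 / (2 * S)) := by
  have hmarkov : (#{x | s ≤ g x} : ℝ) / Fintype.card X * Real.exp (s / S * s)
      ≤ 𝔼 x, Real.exp (s / S * g x) := by
    rw [Fintype.expect_eq_sum_div_card, div_mul_eq_mul_div, ← nsmul_eq_mul, ← sum_const,
      sum_filter]
    gcongr with x
    split_ifs with hx
    · exact Real.exp_le_exp.mpr (mul_le_mul_of_nonneg_left hx (div_nonneg hs hS.le))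
    · exact (Real.exp_pos _).le
  have hexp : (s / S) ^ 2 * S / 2 - s / S * s = -s ^ 2 / (2 * S) := by
    field_simp; ring
  rw [← hexp, Real.exp_sub, le_div_iff₀ (Real.exp_pos _)]
  exact hmarkov.trans (hg _)

theorem card_abs_sub_expect_ge_div_card_le {ι J A : Type*} [Fintype ι] [DecidableEq ι]
    [Fintype J] [Fintype A] [Nonempty A] {π : ι → J} {f : (ι → A) → ℝ} {c : J → ℝ}
    (hf : HasBoundedDifferences π f c) (hc : 0 < ∑ j, c j ^ 2) {s : ℝ} (hs : 0 ≤ s) :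
    (#{x | s ≤ |f x - 𝔼 z, f z|} : ℝ) / Fintype.card (ι → A)
      ≤ 2 * Real.exp (-s ^ 2 / (2 * ∑ j, c j ^ 2)) := by
  classical
  have hupper := card_ge_div_card_le_exp hc hs (expect_exp_mul_sub_expect_le hf)
  have hlower := card_ge_div_card_le_exp (g := fun x => -(f x - 𝔼 z, f z)) hc hs fun t => by
    simpa only [mul_neg, ← neg_mul, neg_sq] using expect_exp_mul_sub_expect_le hf (-t)
  have hcard : (#{x | s ≤ |f x - 𝔼 z, f z|} : ℝ)
      ≤ #{x | s ≤ f x - 𝔼 z, f z} + #{x | s ≤ -(f x - 𝔼 z, f z)} := by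
    norm_cast
    refine (card_le_card fun x => ?_).trans (card_union_le _ _)
    simp only [mem_filter, mem_univ, true_and, mem_union]
    exact le_abs.mp
  calc (#{x | s ≤ |f x - 𝔼 z, f z|} : ℝ) / Fintype.card (ι → A)
      ≤ (#{x | s ≤ f x - 𝔼 z, f z} + #{x | s ≤ -(f x - 𝔼 z, f z)} : ℝ) /
          Fintype.card (ι → A) := by gcongr
    _ ≤ 2 * Real.exp (-s ^ 2 / (2 * ∑ j, c j ^ 2)) := by rw [add_div]; linarith

section UniformLaw

variable {Ω α : Type*} [MeasurableSpace Ω] {μ : Measure Ω} [Fintype α] [MeasurableSpace α]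
  [MeasurableSingletonClass α] {X : Ω → α}

lemma map_eq_smul_count_of_measure_preimage_singleton (hX : Measurable X)
    (hunif : ∀ a, μ (X ⁻¹' {a}) = (Fintype.card α : ℝ≥0∞)⁻¹) :
    μ.map X = (Fintype.card α : ℝ≥0∞)⁻¹ • Measure.count := by
  refine Measure.ext_iff_singleton.mpr fun a => ?_
  rw [Measure.map_apply hX (measurableSet_singleton a), hunif, Measure.smul_apply,
    Measure.count_singleton, smul_eq_mul, mul_one]

lemma integral_comp_eq_expect_of_measure_preimage_singleton (hX : Measurable X)
    (hunif : ∀ a, μ (X ⁻¹' {a}) = (Fintype.card α : ℝ≥0∞)⁻¹) (g : α → ℝ) :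
    ∫ ω, g (X ω) ∂μ = 𝔼 a, g a := by
  rw [← integral_map hX.aemeasurable (by fun_prop),
    map_eq_smul_count_of_measure_preimage_singleton hX hunif, integral_smul_measure,
    integral_count, Fintype.expect_eq_sum_div_card]
  simp [div_eq_inv_mul]

lemma measure_preimage_eq_card_div_of_measure_preimage_singleton (hX : Measurable X)
    (hunif : ∀ a, μ (X ⁻¹' {a}) = (Fintype.card α : ℝ≥0∞)⁻¹) (p : α → Prop) [DecidablePred p] :
    μ {ω | p (X ω)} = (#{a | p a} : ℝ≥0∞) / Fintype.card α := by
  have : {ω | p (X ω)} = X ⁻¹' (({a | p a} : Finset α) : Set α) := by ext; simp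
  rw [this, ← Measure.map_apply hX (Finset.measurableSet _),
    map_eq_smul_count_of_measure_preimage_singleton hX hunif, Measure.smul_apply,
    Measure.count_apply_finset, smul_eq_mul, ENNReal.div_eq_inv_mul]

end UniformLaw

lemma ProbabilityTheory.iIndepFun.measure_preimage_singleton_eq_inv_card {Ω ι A : Type*}
    [MeasurableSpace Ω] {μ : Measure Ω} [Fintype ι] [DecidableEq ι] [Fintype A] [MeasurableSpace A]
    [MeasurableSingletonClass A] {U : ι → Ω → A} (hU : iIndepFun U μ)
    (hunif : ∀ i a, μ {ω | U i ω = a} = (Fintype.card A : ℝ≥0∞)⁻¹) (x : ι → A) :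
    μ ((fun ω i => U i ω) ⁻¹' {x}) = (Fintype.card (ι → A) : ℝ≥0∞)⁻¹ := by
  have hfiber : (fun ω i => U i ω) ⁻¹' {x} = ⋂ i ∈ (univ : Finset ι), U i ⁻¹' {x i} := by
    ext ω; simp [funext_iff]
  rw [hfiber, hU.measure_inter_preimage_eq_mul univ fun i _ => measurableSet_singleton (x i)]
  simp only [Set.preimage, Set.mem_singleton_iff, hunif, prod_const, card_univ,
    Fintype.card_fun, Nat.cast_pow, ENNReal.inv_pow]

theorem measure_abs_sub_integral_ge_le {Ω ι J A : Type*} [MeasurableSpace Ω] {μ : Measure Ω}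
    [Fintype ι] [DecidableEq ι] [Fintype J] [Fintype A] [Nonempty A] [MeasurableSpace A]
    [MeasurableSingletonClass A] {U : ι → Ω → A} (hU_meas : ∀ i, Measurable (U i))
    (hU : iIndepFun U μ) (hunif : ∀ i a, μ {ω | U i ω = a} = (Fintype.card A : ℝ≥0∞)⁻¹)
    {π : ι → J} {f : (ι → A) → ℝ} {c : J → ℝ} (hf : HasBoundedDifferences π f c)
    (hc : 0 < ∑ j, c j ^ 2) {s : ℝ} (hs : 0 ≤ s) :
    μ {ω | s ≤ |f (fun i => U i ω) - ∫ ω', f (fun i => U i ω') ∂μ|}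
      ≤ ENNReal.ofReal (2 * Real.exp (-s ^ 2 / (2 * ∑ j, c j ^ 2))) := by
  have hX : Measurable fun ω i => U i ω := measurable_pi_iff.mpr hU_meas
  have hunifX := hU.measure_preimage_singleton_eq_inv_card hunif
  rw [integral_comp_eq_expect_of_measure_preimage_singleton hX hunifX,
    measure_preimage_eq_card_div_of_measure_preimage_singleton hX hunifX
      fun x => s ≤ |f x - 𝔼 z, f z|,
    ← ENNReal.ofReal_natCast, ← ENNReal.ofReal_natCast,
    ← ENNReal.ofReal_div_of_pos (by positivity)]
  exact ENNReal.ofReal_le_ofReal (card_abs_sub_expect_ge_div_card_le hf hc hs)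

lemma hasBoundedDifferences_placementGraph {κ ν γ : Type*} [Finite κ] [Finite γ] [Nonempty κ]
    {m : ℕ} (hm : 1 ≤ m) {d : κ → ν} (hd : Function.Injective d) {F : ℝ} (hF : 0 ≤ F) :
    HasBoundedDifferences (demandBlock d)
      (fun x : κ × ν × γ → Fin m => (cliqueCoverNumber (placementGraph d x) : ℝ) / F)
      (fun _ => ((m : ℝ) - 1) / F) := fun b x y hxy => by
  have hcast : ((m - 1 : ℕ) : ℝ) = m - 1 := by rw [Nat.cast_sub hm, Nat.cast_one]
  have hxy' : (cliqueCoverNumber (placementGraph d x) : ℝ)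
      ≤ cliqueCoverNumber (placementGraph d y) + (m - 1) := by
    rw [← hcast]; exact_mod_cast cliqueCoverNumber_placementGraph_le_add hd hxy
  have hyx' : (cliqueCoverNumber (placementGraph d y) : ℝ)
      ≤ cliqueCoverNumber (placementGraph d x) + (m - 1) := by
    rw [← hcast]
    exact_mod_cast cliqueCoverNumber_placementGraph_le_add hd fun i hi => (hxy i hi).symm
  rw [← sub_div, abs_div, abs_of_nonneg hF]
  exact div_le_div_of_nonneg_right (abs_sub_le_iff.mpr ⟨by linarith, by linarith⟩) hF

lemma mcdiarmid_exponent_le {K F m ε E : ℝ} (hK : 0 < K) (hF : 0 < F) (hm : 1 < m) :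
    -(ε * E) ^ 2 / (2 * (K * F * ((m - 1) / (m * F)) ^ 2))
      ≤ -2 * ε ^ 2 * E ^ 2 * (m * F) / (K * m ^ 2) := by
  have hm1 : 0 < m - 1 := by linarith
  have hcube : 4 * (m - 1) ^ 2 ≤ m ^ 3 := by nlinarith [mul_nonneg hm1.le (sq_nonneg (m - 2))]
  have hlhs : -(ε * E) ^ 2 / (2 * (K * F * ((m - 1) / (m * F)) ^ 2))
      = -(ε * E) ^ 2 * (m ^ 2 * F / (2 * K * (m - 1) ^ 2)) := by
    field_simp
  have hrhs : -2 * ε ^ 2 * E ^ 2 * (m * F) / (K * m ^ 2) = -(ε * E) ^ 2 * (2 * F / (K * m)) := by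
    field_simp
  rw [hlhs, hrhs, neg_mul, neg_mul, neg_le_neg_iff]
  refine mul_le_mul_of_nonneg_left ?_ (sq_nonneg _)
  rw [div_le_div_iff₀ (by positivity) (by positivity)]
  nlinarith [mul_le_mul_of_nonneg_left hcube (by positivity : 0 ≤ K * F)]

theorem stmt6_general
    {Ω : Type*} [MeasurableSpace Ω] (μ : Measure Ω) [IsProbabilityMeasure μ]
    (K N m F' : ℕ)
    (hF' : 0 < F')
    (hm2 : 2 ≤ m)
    (U : Fin K × Fin N × Fin F' → Ω → Fin m)
    (hU_meas : ∀ i, Measurable (U i))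
    (hU_indep : iIndepFun U μ)
    (hU_unif : ∀ i (f : Fin m), μ {ω | U i ω = f} = ((m : ℝ≥0∞))⁻¹)
    (d : Fin K → Fin N) (hd : Function.Injective d)
    (R : Ω → ℝ)
    (hR : ∀ ω, R ω =
      (cliqueCoverNumber
        (sideInfoGraph
          (fun (k : Fin K) (n : Fin N) (p : Fin F' × Fin m) => U (k, n, p.1) ω = p.2)
          d) : ℝ) / ((m : ℝ) * (F' : ℝ))) :
    ∀ ε : ℝ, 0 < ε →
      μ {ω | ε * (∫ ω', R ω' ∂μ) ≤ |R ω - ∫ ω', R ω' ∂μ|} ≤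
        ENNReal.ofReal (2 * Real.exp (-2 * ε ^ 2 * (∫ ω', R ω' ∂μ) ^ 2 *
          ((m : ℝ) * (F' : ℝ)) / ((K : ℝ) * (m : ℝ) ^ 2))) := by
  intro ε hε
  rcases Nat.eq_zero_or_pos K with rfl | hK
  · -- the exponent has the junk value `x / 0 = 0`
    exact prob_le_one.trans (by simp)
  have : Nonempty (Fin K) := ⟨⟨0, hK⟩⟩
  have : Nonempty (Fin m) := ⟨⟨0, by omega⟩⟩
  have hf := hasBoundedDifferences_placementGraph (γ := Fin F') (m := m) (by omega) hd
    (F := m * F') (by positivity)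
  have hsum : ∑ _ : Fin K × Fin F', (((m : ℝ) - 1) / (m * F')) ^ 2
      = K * F' * (((m : ℝ) - 1) / (m * F')) ^ 2 := by simp
  have hm1 : (1 : ℝ) < m := by exact_mod_cast hm2
  have hc : 0 < ∑ _ : Fin K × Fin F', (((m : ℝ) - 1) / (m * F')) ^ 2 := by
    rw [hsum]
    have : (0 : ℝ) < m - 1 := sub_pos.mpr hm1
    positivity
  have hs : 0 ≤ ε * ∫ ω, R ω ∂μ :=
    mul_nonneg hε.le (integral_nonneg fun ω => by rw [hR]; positivity)
  have hmcdiarmid :=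
    measure_abs_sub_integral_ge_le hU_meas hU_indep (by simpa using hU_unif) hf hc hs
  have hR' : ∀ ω, (cliqueCoverNumber (placementGraph d fun i => U i ω) : ℝ) / (m * F') = R ω :=
    fun ω => (hR ω).symm
  simp only [hR'] at hmcdiarmid
  refine hmcdiarmid.trans (ENNReal.ofReal_le_ofReal ?_)
  rw [hsum]
  gcongr 2 * Real.exp ?_
  exact mcdiarmid_exponent_le (by positivity) (by positivity) hm1

/-- Under the new placement (i.i.d. uniform `U (k,n,g)` on `Fin m`,
`m = ⌈N/M⌉ ≥ 2`, `F = m·F'` packets per file) with an injective demand vector `d`, let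
`R := cc/F` be the normalized optimal clique-cover rate of the random side-information
graph.  Then for every `ε > 0`,
`P(|R − E[R]| ≥ ε·E[R]) ≤ 2·exp(−2·ε²·(E[R])²·F/(K·m²))`. -/
theorem stmt6
    {Ω : Type*} [MeasurableSpace Ω] (μ : Measure Ω) [IsProbabilityMeasure μ]
    (K N m F' : ℕ) (M : ℝ)
    (hM : 0 < M) (hMN : M ≤ (N : ℝ)) (hNK : K < N) (hF' : 0 < F')
    (hm : m = ⌈(N : ℝ) / M⌉₊) (hm2 : 2 ≤ m)
    (U : Fin K × Fin N × Fin F' → Ω → Fin m)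
    (hU_meas : ∀ i, Measurable (U i))
    (hU_indep : iIndepFun U μ)
    (hU_unif : ∀ i (f : Fin m), μ {ω | U i ω = f} = ((m : ℝ≥0∞))⁻¹)
    (d : Fin K → Fin N) (hd : Function.Injective d)
    (R : Ω → ℝ)
    (hR : ∀ ω, R ω =
      (cliqueCoverNumber
        (sideInfoGraph
          (fun (k : Fin K) (n : Fin N) (p : Fin F' × Fin m) => U (k, n, p.1) ω = p.2)
          d) : ℝ) / ((m : ℝ) * (F' : ℝ))) :
    ∀ ε : ℝ, 0 < ε →
      μ {ω | ε * (∫ ω', R ω' ∂μ) ≤ |R ω - ∫ ω', R ω' ∂μ|} ≤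
        ENNReal.ofReal (2 * Real.exp (-2 * ε ^ 2 * (∫ ω', R ω' ∂μ) ^ 2 *
          ((m : ℝ) * (F' : ℝ)) / ((K : ℝ) * (m : ℝ) ^ 2))) :=
  stmt6_general μ K N m F' hF' hm2 U hU_meas hU_indep hU_unif d hd R hR
end

section
/- Let G and G' be simple graphs on the same finite vertex set V, and let W ⊆ V be a set of vertices such that every edge of G that is not an edge of G' and every edge of G' that is not an edge of G has at least one endpoint in W. Then |cc(G) − cc(G')| ≤ |W|, where cc(H) denotes the minimum number of cliques of the graph H needed to cover its whole vertex set. -/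
namespace SimpleGraph

variable {V ι κ : Type*}

def IsCliqueCover (G : SimpleGraph V) (c : ι → Set V) : Prop :=
  (∀ i, G.IsClique (c i)) ∧ ∀ v, ∃ i, v ∈ c i

theorem IsCliqueCover.comp_surjective {G : SimpleGraph V} {c : ι → Set V}
    (hc : G.IsCliqueCover c) {f : κ → ι} (hf : f.Surjective) : G.IsCliqueCover (c ∘ f) := by
  refine ⟨fun k => hc.1 (f k), fun v => ?_⟩
  obtain ⟨i, hi⟩ := hc.2 v
  obtain ⟨k, rfl⟩ := hf i
  exact ⟨k, hi⟩

theorem IsCliqueCover.card_mem [Fintype ι] {G : SimpleGraph V} {c : ι → Set V}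
    (hc : G.IsCliqueCover c) :
    Fintype.card ι ∈ {n : ℕ | ∃ c : Fin n → Set V, G.IsCliqueCover c} :=
  ⟨c ∘ (Fintype.equivFin ι).symm, hc.comp_surjective (Fintype.equivFin ι).symm.surjective⟩

theorem IsCliqueCover.sdiff_sum_singletons {G G' : SimpleGraph V} {W : Set V} {c : ι → Set V}
    (hc : G'.IsCliqueCover c) (hW : ∀ v w, G'.Adj v w → v ∉ W → w ∉ W → G.Adj v w) :
    G.IsCliqueCover (Sum.elim (fun i => c i \ W) (fun w : W => {w.1})) := by
  constructor
  · rintro (i | w)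
    · exact fun v hv w hw hvw => hW v w (hc.1 i hv.1 hw.1 hvw) hv.2 hw.2
    · exact isClique_singleton _
  · intro v
    by_cases hv : v ∈ W
    · exact ⟨Sum.inr ⟨v, hv⟩, rfl⟩
    · obtain ⟨i, hi⟩ := hc.2 v
      exact ⟨Sum.inl i, hi, hv⟩

end SimpleGraph

theorem Nat.sInf_le_sInf_add {A B : Set ℕ} {k : ℕ} (hAB : ∀ n ∈ A, n + k ∈ B)
    (hBA : B.Nonempty → A.Nonempty) : sInf B ≤ sInf A + k := by
  rcases A.eq_empty_or_nonempty with rfl | hA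
  · rw [Set.not_nonempty_iff_eq_empty.mp (mt hBA Set.not_nonempty_empty), Nat.sInf_empty]
    exact Nat.zero_le _
  · exact Nat.sInf_le (hAB _ (Nat.sInf_mem hA))

open SimpleGraph

theorem exists_isCliqueCover_add_card {V : Type*} {G G' : SimpleGraph V} {W : Finset V}
    (hW : ∀ v w, ¬(G.Adj v w ↔ G'.Adj v w) → v ∈ W ∨ w ∈ W) {n : ℕ} {c : Fin n → Set V}
    (hc : G'.IsCliqueCover c) : ∃ d : Fin (n + W.card) → Set V, G.IsCliqueCover d := by
  have hcover := hc.sdiff_sum_singletons (G := G) (W := (W : Set V)) fun v w hvw hv hw => by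
    by_contra h
    exact (hW v w fun hiff => h (hiff.mpr hvw)).elim hv hw
  simpa using hcover.card_mem

theorem cliqueCoverNumber_le_add_card {V : Type*} {G G' : SimpleGraph V} (W : Finset V)
    (hW : ∀ v w, ¬(G.Adj v w ↔ G'.Adj v w) → v ∈ W ∨ w ∈ W) :
    cliqueCoverNumber G ≤ cliqueCoverNumber G' + W.card := by
  have hW' : ∀ v w, ¬(G'.Adj v w ↔ G.Adj v w) → v ∈ W ∨ w ∈ W :=
    fun v w h => hW v w fun hiff => h hiff.symm
  refine Nat.sInf_le_sInf_add (fun n ⟨c, hc⟩ => exists_isCliqueCover_add_card hW hc) ?_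
  rintro ⟨n, c, hc⟩
  exact ⟨_, exists_isCliqueCover_add_card hW' hc⟩

theorem stmt8_general {V : Type*} (G G' : SimpleGraph V) (W : Finset V)
    (hW : ∀ v w : V, ¬(G.Adj v w ↔ G'.Adj v w) → v ∈ W ∨ w ∈ W) :
    |(cliqueCoverNumber G : ℤ) - (cliqueCoverNumber G' : ℤ)| ≤ (W.card : ℤ) := by
  have h₁ := cliqueCoverNumber_le_add_card W hW
  have h₂ := cliqueCoverNumber_le_add_card (G := G') (G' := G) W
    fun v w h => hW v w fun hiff => h hiff.symm
  rw [abs_sub_le_iff]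
  omega

/-- Let `G` and `G'` be simple graphs on the same finite vertex set `V`,
and let `W ⊆ V` be a set of vertices such that every edge of `G` that is not an edge of
`G'`, and every edge of `G'` that is not an edge of `G`, has at least one endpoint in `W`.
Then `|cc(G) − cc(G')| ≤ |W|`. -/
theorem stmt8 {V : Type*} [Fintype V] (G G' : SimpleGraph V) (W : Finset V)
    (hW : ∀ v w : V, ¬(G.Adj v w ↔ G'.Adj v w) → v ∈ W ∨ w ∈ W) :
    |(cliqueCoverNumber G : ℤ) - (cliqueCoverNumber G' : ℤ)| ≤ (W.card : ℤ) :=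
  stmt8_general G G' W hW
end

section
/- Under the new placement with distinct demands, for every nonempty S ⊆ {1,…,K} with |S| ≥ 2 and every k ∈ S, the random variable V_{k,S∖k} has the Binomial(F', μ(|S|)) distribution, where μ(s) := m·(1/m)^{s−1}·(1 − 1/m)^{K−s+1}; moreover, the random variables (V_{k,S∖k})_{k∈S} are mutually independent. -/
/-!
For a requested file `d k` and a group `g`, the colouring `j ↦ U (j, d k, g)` of the users by the
`m` packets of the group is uniform, and `V ω S k` counts the groups whose colouring has `S.erase k`
as a full colour class (the colour is then forced, `S.erase k` being nonempty). Choosing the colour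
and a colouring of the other `K - |S| + 1` users that avoids it shows that this happens with
probability `m (m - 1)^(K - |S| + 1) / m^K = μ(|S|)`; the colourings of the `F'` groups are
independent, so `V · S k` is binomial. For distinct `k ∈ S` the files `d k` are distinct, so the
`V · S k` are functions of disjoint blocks of the independent family `U`.
-/

open MeasureTheory ProbabilityTheory Finset
open scoped ENNReal

lemma prod_ite_mem_const {ι M : Type*} [Fintype ι] [CommMonoid M] (T : Finset ι)
    [DecidablePred (· ∈ T)] (p q : M) :
    ∏ i, (if i ∈ T then p else q) = p ^ #T * q ^ (Fintype.card ι - #T) := by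
  classical
  rw [prod_ite, filter_mem_eq_inter, univ_inter, filter_not, filter_mem_eq_inter, univ_inter,
    prod_const, prod_const, card_univ_sdiff]

section Fibres

variable {α γ ι : Type*} [Fintype α] [DecidableEq α] [Fintype γ] [DecidableEq γ]

def mapsWithFibre (T : Finset α) : Finset (α → γ) := {v | ∃ c, ∀ a, v a = c ↔ a ∈ T}

lemma card_filter_fibre_eq (T : Finset α) (c : γ) :
    #{v : α → γ | ∀ a, v a = c ↔ a ∈ T} = (Fintype.card γ - 1) ^ (Fintype.card α - #T) := by
  have hpi : ({v : α → γ | ∀ a, v a = c ↔ a ∈ T} : Finset _) =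
      Fintype.piFinset fun a ↦ if a ∈ T then {c} else {c}ᶜ := by
    ext v
    simp only [mem_filter, mem_univ, true_and, Fintype.mem_piFinset]
    exact forall_congr' fun a ↦ by split_ifs with ha <;> simp [ha]
  simp [hpi, Fintype.card_piFinset, apply_ite, card_compl, prod_ite_mem_const]

lemma card_mapsWithFibre {T : Finset α} (hT : T.Nonempty) :
    #(mapsWithFibre (γ := γ) T) =
      Fintype.card γ * (Fintype.card γ - 1) ^ (Fintype.card α - #T) := by
  obtain ⟨t, ht⟩ := hT
  rw [card_eq_sum_card_fiberwise (f := fun v ↦ v t) (t := univ)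
    fun _ _ ↦ mem_coe.2 (mem_univ _)]
  have hfibre (c : γ) : ({v ∈ mapsWithFibre T | v t = c} : Finset (α → γ)) =
      ({v : α → γ | ∀ a, v a = c ↔ a ∈ T} : Finset _) := by
    ext v
    simp only [mapsWithFibre, mem_filter, mem_univ, true_and]
    constructor
    · rintro ⟨⟨c', hc'⟩, rfl⟩
      rwa [(hc' t).2 ht]
    · intro hv
      exact ⟨⟨c, hv⟩, (hv t).2 ht⟩
  simp [hfibre, card_filter_fibre_eq]

lemma card_filter_fibre_eq_card_filter_mem [Fintype ι] {T : Finset α} (hT : T.Nonempty)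
    (y : ι → α → γ) :
    #{p : ι × γ | ∀ a, y p.1 a = p.2 ↔ a ∈ T} = #{i | y i ∈ mapsWithFibre T} := by
  obtain ⟨t, ht⟩ := hT
  refine card_nbij' Prod.fst (fun i ↦ (i, y i t)) ?_ ?_ ?_ fun _ _ ↦ rfl
  · rintro ⟨i, c⟩ hc
    simp only [coe_filter, mapsWithFibre, mem_filter, mem_univ, true_and,
      Set.mem_ofPred_eq] at hc ⊢
    exact ⟨c, hc⟩
  · intro i hi
    simp only [coe_filter, mapsWithFibre, mem_filter, mem_univ, true_and,
      Set.mem_ofPred_eq] at hi ⊢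
    obtain ⟨c, hc⟩ := hi
    rwa [(hc t).2 ht]
  · rintro ⟨i, c⟩ hc
    simp only [coe_filter, mem_univ, true_and, Set.mem_ofPred_eq] at hc
    simp [(hc t).2 ht]

end Fibres

/-- The probability that a given `t`-set is a colour class of a uniform random `q`-colouring of
`t + r` points; the paper's `μ(s)` is `fibreProb m (s - 1) (K - s + 1)`. -/
noncomputable def fibreProb (q t r : ℕ) : ℝ := q * (1 / q) ^ t * (1 - 1 / q) ^ r

lemma one_div_natCast_le_one {q : ℕ} (hq : 0 < q) : (1 : ℝ) / q ≤ 1 :=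
  (div_le_one (by positivity)).2 (by exact_mod_cast hq)

lemma fibreProb_nonneg {q : ℕ} (hq : 0 < q) (t r : ℕ) : 0 ≤ fibreProb q t r :=
  mul_nonneg (by positivity) (pow_nonneg (sub_nonneg.2 (one_div_natCast_le_one hq)) _)

lemma fibreProb_le_one {q t : ℕ} (hq : 0 < q) (ht : 1 ≤ t) (r : ℕ) : fibreProb q t r ≤ 1 := by
  have h1q := one_div_natCast_le_one hq
  obtain ⟨t, rfl⟩ : ∃ t', t = t' + 1 := ⟨t - 1, by omega⟩
  calc fibreProb q (t + 1) r = (q * (1 / q)) * (1 / q) ^ t * (1 - 1 / q) ^ r := by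
        unfold fibreProb; ring
    _ = (1 / q) ^ t * (1 - 1 / q) ^ r := by
        rw [mul_one_div_cancel (by positivity), one_mul]
    _ ≤ 1 := mul_le_one₀ (pow_le_one₀ (by positivity) h1q) (pow_nonneg (sub_nonneg.2 h1q) _)
        (pow_le_one₀ (sub_nonneg.2 h1q) (sub_le_self 1 (by positivity)))

lemma ofReal_fibreProb {q t n : ℕ} (hq : 0 < q) (htn : t ≤ n) :
    ENNReal.ofReal (fibreProb q t (n - t)) =
      ((q * (q - 1) ^ (n - t) : ℕ) : ℝ≥0∞) * (q : ℝ≥0∞)⁻¹ ^ n := by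
  have hqR : (0 : ℝ) < q := by exact_mod_cast hq
  have hreal : fibreProb q t (n - t) = ((q * (q - 1) ^ (n - t) : ℕ) : ℝ) * (q : ℝ)⁻¹ ^ n := by
    obtain ⟨r, rfl⟩ : ∃ r, n = t + r := ⟨n - t, by omega⟩
    have hsub : 1 - 1 / (q : ℝ) = (q - 1) * (q : ℝ)⁻¹ := by field_simp
    rw [fibreProb, Nat.add_sub_cancel_left, hsub, Nat.cast_mul, Nat.cast_pow, Nat.cast_sub hq,
      Nat.cast_one, pow_add, one_div, mul_pow]
    ring
  rw [hreal, ENNReal.ofReal_mul (by positivity), ENNReal.ofReal_natCast,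
    ENNReal.ofReal_pow (by positivity), ENNReal.ofReal_inv_of_pos hqR, ENNReal.ofReal_natCast]

lemma ENNReal.ofReal_choose_mul_pow_mul_one_sub_pow {p : ℝ} (h0 : 0 ≤ p) (h1 : p ≤ 1)
    (n j : ℕ) :
    ENNReal.ofReal (n.choose j * p ^ j * (1 - p) ^ (n - j)) =
      n.choose j * ENNReal.ofReal p ^ j * (1 - ENNReal.ofReal p) ^ (n - j) := by
  rw [ENNReal.ofReal_mul (by positivity), ENNReal.ofReal_mul (by positivity),
    ENNReal.ofReal_natCast, ENNReal.ofReal_pow h0, ENNReal.ofReal_pow (by linarith),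
    ENNReal.ofReal_sub _ h0, ENNReal.ofReal_one]

namespace ProbabilityTheory

variable {Ω ι κ β : Type*} {mΩ : MeasurableSpace Ω} {P : Measure Ω} [MeasurableSpace β]

lemma iIndepFun.curry {X : ι × κ → Ω → β} (hX : ∀ p, Measurable (X p)) (h : iIndepFun X P) :
    iIndepFun (fun i ω j ↦ X (i, j) ω) P := by
  have := h.isProbabilityMeasure
  have (p : ι × κ) : IsProbabilityMeasure (P.map (X p)) :=
    Measure.isProbabilityMeasure_map (hX p).aemeasurable
  have hrow (i : ι) :
      P.map (fun ω j ↦ X (i, j) ω) = Measure.infinitePi fun j ↦ P.map (X (i, j)) :=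
    (iIndepFun_iff_map_fun_eq_infinitePi_map (by fun_prop)).1
      (h.precomp (Prod.mk_right_injective i))
  have hcurry : (fun ω i j ↦ X (i, j) ω) = MeasurableEquiv.curry ι κ β ∘ fun ω p ↦ X p ω := rfl
  rw [iIndepFun_iff_map_fun_eq_infinitePi_map (by fun_prop), hcurry,
    ← Measure.map_map (by fun_prop) (by fun_prop),
    (iIndepFun_iff_map_fun_eq_infinitePi_map (by fun_prop)).1 h,
    Measure.infinitePi_map_curry fun i j ↦ P.map (X (i, j))]
  simp only [hrow]

lemma iIndepFun.measure_preimage_finset [Fintype ι] [MeasurableSingletonClass β]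
    {X : ι → Ω → β} (hX : ∀ i, Measurable (X i)) (h : iIndepFun X P) {c : ℝ≥0∞}
    (hc : ∀ i b, P {ω | X i ω = b} = c) (A : Finset (ι → β)) :
    P ((fun ω i ↦ X i ω) ⁻¹' A) = #A * c ^ Fintype.card ι := by
  have hatom (a : ι → β) : (fun ω i ↦ X i ω) ⁻¹' {a} = ⋂ i, X i ⁻¹' {a i} := by
    ext ω; simp [funext_iff]
  rw [← sum_measure_preimage_singleton A fun a _ ↦ by
    rw [hatom]; exact .iInter fun i ↦ hX i (measurableSet_singleton _)]
  simp_rw [hatom, h.meas_iInter fun i ↦ ⟨_, measurableSet_singleton _, rfl⟩]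
  simp [Set.preimage, hc]

lemma iIndepFun.measure_card_mem_eq [Fintype ι] {X : ι → Ω → β}
    (hX : ∀ i, Measurable (X i)) (h : iIndepFun X P) {B : Set β} [DecidablePred (· ∈ B)]
    (hB : MeasurableSet B) {p : ℝ≥0∞} (hp : ∀ i, P (X i ⁻¹' B) = p) (j : ℕ) :
    P {ω | #{i | X i ω ∈ B} = j} =
      (Fintype.card ι).choose j * p ^ j * (1 - p) ^ (Fintype.card ι - j) := by
  classical
  have := h.isProbabilityMeasure
  let hits : Ω → Finset ι := fun ω ↦ {i | X i ω ∈ B}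
  let side (T : Finset ι) (i : ι) : Set β := if i ∈ T then B else Bᶜ
  have hside (T : Finset ι) (i : ι) : MeasurableSet (side T i) := by
    unfold side; split_ifs
    exacts [hB, hB.compl]
  have hfibre (T : Finset ι) : hits ⁻¹' {T} = ⋂ i, X i ⁻¹' side T i := by
    ext ω
    simp only [hits, side, Set.mem_preimage, Set.mem_singleton_iff, Finset.ext_iff, mem_filter,
      mem_univ, true_and, Set.mem_iInter]
    exact forall_congr' fun i ↦ by split_ifs with hi <;> simp [hi]
  have hprob (T : Finset ι) : P (hits ⁻¹' {T}) = p ^ #T * (1 - p) ^ (Fintype.card ι - #T) := by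
    rw [hfibre, h.meas_iInter fun i ↦ ⟨_, hside T i, rfl⟩]
    have hfactor (i : ι) : P (X i ⁻¹' side T i) = if i ∈ T then p else 1 - p := by
      unfold side; split_ifs
      · exact hp i
      · rw [Set.preimage_compl, prob_compl_eq_one_sub (hX i hB), hp]
    simp only [hfactor, prod_ite_mem_const]
  have hevent : {ω | #{i | X i ω ∈ B} = j} = hits ⁻¹' ↑(powersetCard j (univ : Finset ι)) := by
    ext ω; simp [hits]
  rw [hevent, ← sum_measure_preimage_singleton _ fun T _ ↦ by
    rw [hfibre]; exact .iInter fun i ↦ hX i (hside T i)]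
  rw [sum_congr rfl fun T hT ↦ by rw [hprob, (mem_powersetCard_univ.1 hT)], sum_const,
    card_powersetCard, card_univ, nsmul_eq_mul, mul_assoc]

lemma iIndepFun.measure_preimage_mapsWithFibre {α γ : Type*} [Fintype α] [DecidableEq α]
    [Fintype γ] [DecidableEq γ] [Nonempty γ] [MeasurableSpace γ] [MeasurableSingletonClass γ]
    {X : α → Ω → γ} (hX : ∀ a, Measurable (X a)) (h : iIndepFun X P)
    (hc : ∀ a c, P {ω | X a ω = c} = (Fintype.card γ : ℝ≥0∞)⁻¹) {T : Finset α}
    (hT : T.Nonempty) :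
    P ((fun ω a ↦ X a ω) ⁻¹' ↑(mapsWithFibre T : Finset (α → γ))) =
      ENNReal.ofReal (fibreProb (Fintype.card γ) #T (Fintype.card α - #T)) := by
  rw [h.measure_preimage_finset hX hc, card_mapsWithFibre hT,
    ofReal_fibreProb Fintype.card_pos (card_le_univ T)]

lemma iIndepFun.measure_card_rows_mem_mapsWithFibre {α γ : Type*} [Fintype ι] [Fintype α]
    [DecidableEq α] [Fintype γ] [DecidableEq γ] [Nonempty γ] [MeasurableSpace γ]
    [MeasurableSingletonClass γ] {X : ι × α → Ω → γ} (hX : ∀ p, Measurable (X p))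
    (h : iIndepFun X P) (hc : ∀ p c, P {ω | X p ω = c} = (Fintype.card γ : ℝ≥0∞)⁻¹)
    {T : Finset α} (hT : T.Nonempty) (j : ℕ) :
    P {ω | #{i | (fun a ↦ X (i, a) ω) ∈ mapsWithFibre T} = j} =
      ENNReal.ofReal ((Fintype.card ι).choose j *
        fibreProb (Fintype.card γ) #T (Fintype.card α - #T) ^ j *
        (1 - fibreProb (Fintype.card γ) #T (Fintype.card α - #T)) ^ (Fintype.card ι - j)) := by
  have hrow (i : ι) : P ((fun ω a ↦ X (i, a) ω) ⁻¹' ↑(mapsWithFibre T : Finset (α → γ))) =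
      ENNReal.ofReal (fibreProb (Fintype.card γ) #T (Fintype.card α - #T)) :=
    (h.precomp (Prod.mk_right_injective i)).measure_preimage_mapsWithFibre (fun _ ↦ hX _)
      (fun _ ↦ hc _) hT
  have hcount := (h.curry hX).measure_card_mem_eq (fun i ↦ measurable_pi_lambda _ fun a ↦ hX _)
    (mapsWithFibre T : Finset (α → γ)).finite_toSet.measurableSet hrow j
  simp only [mem_coe] at hcount
  rw [hcount, ENNReal.ofReal_choose_mul_pow_mul_one_sub_pow (fibreProb_nonneg Fintype.card_pos _ _)
    (fibreProb_le_one Fintype.card_pos hT.card_pos _)]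

end ProbabilityTheory

theorem stmt10_general
    {Ω : Type*} [MeasurableSpace Ω] (μ : Measure Ω) [IsProbabilityMeasure μ]
    (K N m F' : ℕ)
    (hm2 : 2 ≤ m)
    (U : Fin K × Fin N × Fin F' → Ω → Fin m)
    (hU_meas : ∀ i, Measurable (U i))
    (hU_indep : iIndepFun U μ)
    (hU_unif : ∀ i (f : Fin m), μ {ω | U i ω = f} = ((m : ℝ≥0∞))⁻¹)
    (d : Fin K → Fin N) (hd : Function.Injective d)
    (V : Ω → Finset (Fin K) → Fin K → ℕ)
    (hV : ∀ ω S k, V ω S k =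
      (Finset.univ.filter (fun p : Fin F' × Fin m =>
        ∀ j : Fin K, (U (j, d k, p.1) ω = p.2 ↔ j ∈ S.erase k))).card) :
    ∀ S : Finset (Fin K), 2 ≤ S.card →
      (∀ k ∈ S, ∀ j : ℕ,
        μ {ω | V ω S k = j} =
          ENNReal.ofReal ((F'.choose j : ℝ) *
            ((m : ℝ) * (1 / (m : ℝ)) ^ (S.card - 1) *
              (1 - 1 / (m : ℝ)) ^ (K - S.card + 1)) ^ j *
            (1 - (m : ℝ) * (1 / (m : ℝ)) ^ (S.card - 1) *
              (1 - 1 / (m : ℝ)) ^ (K - S.card + 1)) ^ (F' - j))) ∧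
      iIndepFun
        (fun k : {x : Fin K // x ∈ S} => fun ω => V ω S k.1) μ := by
  intro S hS
  have : NeZero m := ⟨by omega⟩
  have hT {k : Fin K} (hk : k ∈ S) : (S.erase k).Nonempty :=
    (one_lt_card_iff_nontrivial.1 hS).erase_nonempty
  have hVR (k : Fin K) (hk : k ∈ S) (ω : Ω) :
      V ω S k = #{g | (fun j ↦ U (j, d k, g) ω) ∈ mapsWithFibre (γ := Fin m) (S.erase k)} := by
    rw [hV]
    convert card_filter_fibre_eq_card_filter_mem (hT hk) (fun g j ↦ U (j, d k, g) ω)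
  refine ⟨fun k hk j ↦ ?_, ?_⟩
  · have hSK : S.card ≤ K := (card_le_univ S).trans_eq (Fintype.card_fin K)
    have hinj : Function.Injective fun q : Fin F' × Fin K ↦ (q.2, d k, q.1) :=
      fun _ _ h ↦ Prod.ext (Prod.mk.inj (Prod.mk.inj h).2).2 (Prod.mk.inj h).1
    have hunif (p : Fin F' × Fin K) (c : Fin m) :
        μ {ω | U (p.2, d k, p.1) ω = c} = (Fintype.card (Fin m) : ℝ≥0∞)⁻¹ := by
      rw [Fintype.card_fin]; exact hU_unif _ c
    simp_rw [hVR k hk]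
    convert (hU_indep.precomp hinj).measure_card_rows_mem_mapsWithFibre
      (fun p ↦ hU_meas (p.2, d k, p.1)) hunif (hT hk) j using 3 <;>
    simp [fibreProb, card_erase_of_mem hk, show K - (S.card - 1) = K - S.card + 1 by omega]
  · have hinj : Function.Injective fun q : (S × Fin F') × Fin K ↦ (q.2, d q.1.1, q.1.2) := by
      rintro ⟨⟨k, g⟩, j⟩ ⟨⟨k', g'⟩, j'⟩ h
      simp only [Prod.mk.injEq] at h
      obtain ⟨rfl, hkk, rfl⟩ := h
      rw [Subtype.ext (hd hkk)]
    have hblocks := ((hU_indep.precomp hinj).curry fun _ ↦ hU_meas _).curry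
      fun _ ↦ measurable_pi_lambda _ fun _ ↦ hU_meas _
    convert hblocks.comp
      (fun k (w : Fin F' → Fin K → Fin m) ↦ #{g | w g ∈ mapsWithFibre (γ := Fin m) (S.erase k)})
      (fun _ ↦ .of_discrete) using 1
    funext k ω
    exact hVR k k.2 ω

/-- Under the new placement (i.i.d. uniform `U (k,n,g)` on `Fin m`,
`m = ⌈N/M⌉ ≥ 2`, `F = m·F'` packets per file) with an injective demand vector `d`,
for every `S ⊆ [K]` with `|S| ≥ 2` and every `k ∈ S`, the random variable
`V ω S k` (the number of packets of file `d k` stored in exactly the caches of `S \ {k}`)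
has the `Binomial(F', μ(|S|))` distribution with
`μ(s) = m·(1/m)^(s−1)·(1 − 1/m)^(K−s+1)`; moreover the family `(V · S k)_{k ∈ S}` is
mutually independent. -/
theorem stmt10
    {Ω : Type*} [MeasurableSpace Ω] (μ : Measure Ω) [IsProbabilityMeasure μ]
    (K N m F' : ℕ) (M : ℝ)
    (hM : 0 < M) (hMN : M ≤ (N : ℝ)) (hNK : K < N) (hF' : 0 < F')
    (hm : m = ⌈(N : ℝ) / M⌉₊) (hm2 : 2 ≤ m)
    (U : Fin K × Fin N × Fin F' → Ω → Fin m)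
    (hU_meas : ∀ i, Measurable (U i))
    (hU_indep : iIndepFun U μ)
    (hU_unif : ∀ i (f : Fin m), μ {ω | U i ω = f} = ((m : ℝ≥0∞))⁻¹)
    (d : Fin K → Fin N) (hd : Function.Injective d)
    (V : Ω → Finset (Fin K) → Fin K → ℕ)
    (hV : ∀ ω S k, V ω S k =
      (Finset.univ.filter (fun p : Fin F' × Fin m =>
        ∀ j : Fin K, (U (j, d k, p.1) ω = p.2 ↔ j ∈ S.erase k))).card) :
    ∀ S : Finset (Fin K), 2 ≤ S.card →
      (∀ k ∈ S, ∀ j : ℕ,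
        μ {ω | V ω S k = j} =
          ENNReal.ofReal ((F'.choose j : ℝ) *
            ((m : ℝ) * (1 / (m : ℝ)) ^ (S.card - 1) *
              (1 - 1 / (m : ℝ)) ^ (K - S.card + 1)) ^ j *
            (1 - (m : ℝ) * (1 / (m : ℝ)) ^ (S.card - 1) *
              (1 - 1 / (m : ℝ)) ^ (K - S.card + 1)) ^ (F' - j))) ∧
      iIndepFun
        (fun k : {x : Fin K // x ∈ S} => fun ω => V ω S k.1) μ :=
  stmt10_general μ K N m F' hm2 U hU_meas hU_indep hU_unif d hd V hV
end

section
/- Fix integers K ≥ 1 and m ≥ 2, set q := 1/m and μ(s) := m·q^{s−1}·(1−q)^{K−s+1} for 1 ≤ s ≤ K, and assume μ(1) = m·(1−q)^K ≤ 1. For each positive integer F' and each nonempty S ⊆ {1,…,K}, let (Y^{F'}_{k,S})_{k∈S} be independent Binomial(F', μ(|S|)) random variables. Then lim_{F'→∞} (1/(m·F')) · Σ_{∅≠S⊆{1,…,K}} E[ max_{k∈S} Y^{F'}_{k,S} ] = ((1−q)/q)·(1 − (1−q)^K). -/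
/-!
For `Y_k ~ Bin(n, p)`, `n p = E[Y_k] ≤ E[max_{k ∈ S} Y_k] ≤ n p + ∑_{k ∈ S} E[(Y_k - n p)⁺]`, and
`(y - n p)⁺ ≤ (y - n p)² / (2√n) + √n / 2` together with `Var Y_k ≤ n` bounds each positive part
by `√n`. Hence `E[max_{k ∈ S} Y_k] / n → p = μ(|S|)`, which is a probability because `q ≤ 1 - q`
makes `μ` decreasing on `[1, K]`. Grouping the subsets `S` by cardinality, `∑_S μ(|S|) / m` is
`∑_{s=1}^K C(K,s) q^(s-1) (1-q)^(K-s+1)`, i.e. `(1-q)/q` times the binomial expansion of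
`(q + (1-q))^K` without its `s = 0` term.
-/

open MeasureTheory ProbabilityTheory Finset Filter Topology
open scoped unitInterval

lemma max_zero_le_sq_div_add {s : ℝ} (hs : 0 < s) (y : ℝ) :
    max y 0 ≤ y ^ 2 / (2 * s) + s / 2 := by
  have hgap : y ^ 2 / (2 * s) + s / 2 - y = (y - s) ^ 2 / (2 * s) := by field_simp; ring
  exact max_le (by linarith [show 0 ≤ (y - s) ^ 2 / (2 * s) by positivity]) (by positivity)

namespace ProbabilityTheory

lemma integral_natCast_binomial (n : ℕ) (p : I) : ∫ x, (x : ℝ) ∂binomial n p = n * p := by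
  rw [integral_binomial, ← Nat.range_succ_eq_Iic]
  have := congrArg (Polynomial.eval (p : ℝ)) (bernsteinPolynomial.sum_smul ℝ n)
  simpa [bernsteinPolynomial, Polynomial.eval_finsetSum, mul_comm] using this

lemma integral_sq_sub_binomial (n : ℕ) (p : I) :
    ∫ x, ((x : ℝ) - n * p) ^ 2 ∂binomial n p = n * p * (1 - p) := by
  rw [integral_binomial, ← Nat.range_succ_eq_Iic]
  have := congrArg (Polynomial.eval (p : ℝ)) (bernsteinPolynomial.variance ℝ n)
  simp only [bernsteinPolynomial, Polynomial.eval_finsetSum, Polynomial.eval_mul,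
    Polynomial.eval_pow, Polynomial.eval_sub, Polynomial.eval_natCast,
    Polynomial.eval_X, Polynomial.eval_one, nsmul_eq_mul] at this
  rw [← this]
  exact sum_congr rfl fun k _ => by simp only [smul_eq_mul]; ring

lemma integral_posPart_sub_binomial_le (n : ℕ) (p : I) :
    ∫ x, max ((x : ℝ) - n * p) 0 ∂binomial n p ≤ √n := by
  rcases n.eq_zero_or_pos with rfl | hn
  · simp [binomial_zero]
  have hs : 0 < √(n : ℝ) := Real.sqrt_pos.2 (by exact_mod_cast hn)
  have hvar : (n : ℝ) * p * (1 - p) ≤ n := by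
    rw [mul_assoc]
    exact mul_le_of_le_one_right (Nat.cast_nonneg n)
      (mul_le_one₀ p.2.2 (unitInterval.one_minus_nonneg p) (unitInterval.one_minus_le_one p))
  calc ∫ x, max ((x : ℝ) - n * p) 0 ∂binomial n p
      ≤ ∫ x, (((x : ℝ) - n * p) ^ 2 / (2 * √n) + √n / 2) ∂binomial n p :=
        integral_mono (integrable_binomial _) (integrable_binomial _)
          fun x => max_zero_le_sq_div_add hs _
    _ = n * p * (1 - p) / (2 * √n) + √n / 2 := by
        rw [integral_add (integrable_binomial _) (integrable_const _), integral_div,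
          integral_sq_sub_binomial]
        simp
    _ ≤ n / (2 * √n) + √n / 2 := by gcongr
    _ = √n := by
        field_simp
        rw [Real.sq_sqrt (Nat.cast_nonneg n)]
        ring

variable {Ω ι : Type*} [MeasurableSpace Ω] {μ : Measure Ω}

lemma hasLaw_binomial_of_measure_eq {X : Ω → ℕ} (hX : Measurable X) {n : ℕ} {p : I}
    (h : ∀ j, μ {ω | X ω = j} = ENNReal.ofReal (n.choose j * p ^ j * (1 - p) ^ (n - j))) :
    HasLaw X (binomial n p) μ where
  aemeasurable := hX.aemeasurable
  map_eq := Measure.ext_of_singleton fun j => by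
    rw [Measure.map_apply hX (measurableSet_singleton j), binomial_singleton]
    exact h j

lemma HasLaw.integrable_comp_binomial {X : Ω → ℕ} {n : ℕ} {p : I}
    (hX : HasLaw X (binomial n p) μ) (f : ℕ → ℝ) : Integrable (fun ω => f (X ω)) μ :=
  (integrable_map_measure AEStronglyMeasurable.of_discrete hX.aemeasurable).1
    (hX.map_eq ▸ integrable_binomial f)

lemma aemeasurable_finset_sup {α : Type*} [MeasurableSpace α] [SemilatticeSup α] [OrderBot α]
    [MeasurableSup₂ α] {S : Finset ι} {Y : ι → Ω → α} (hY : ∀ k ∈ S, AEMeasurable (Y k) μ) :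
    AEMeasurable (fun ω => S.sup fun k => Y k ω) μ := by
  classical
  induction S using Finset.induction_on with
  | empty => exact aemeasurable_const
  | insert k S _ ih =>
    simp only [sup_insert]
    exact (hY k (mem_insert_self k S)).sup (ih fun j hj => hY j (mem_insert_of_mem hj))

lemma natCast_sup_le_add_sum_posPart (S : Finset ι) (y : ι → ℕ) {c : ℝ} (hc : 0 ≤ c) :
    ((S.sup y : ℕ) : ℝ) ≤ c + ∑ k ∈ S, max ((y k : ℝ) - c) 0 := by
  obtain rfl | hS := S.eq_empty_or_nonempty
  · simpa using hc
  obtain ⟨k, hk, hsup⟩ := S.exists_mem_eq_sup hS y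
  have hterm : max ((y k : ℝ) - c) 0 ≤ ∑ j ∈ S, max ((y j : ℝ) - c) 0 :=
    single_le_sum (f := fun j => max ((y j : ℝ) - c) 0) (fun _ _ => le_max_right _ _) hk
  rw [hsup]
  linarith [le_max_left ((y k : ℝ) - c) 0]

variable [IsProbabilityMeasure μ] {S : Finset ι} {Y : ι → Ω → ℕ} {n : ℕ} {p : I}

lemma integrable_natCast_sup_of_hasLaw_binomial (hY : ∀ k ∈ S, HasLaw (Y k) (binomial n p) μ) :
    Integrable (fun ω => ((S.sup fun k => Y k ω : ℕ) : ℝ)) μ := by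
  refine Integrable.mono' (integrable_const (n : ℝ))
    (measurable_from_nat.comp_aemeasurable
      (aemeasurable_finset_sup fun k hk => (hY k hk).aemeasurable)).aestronglyMeasurable ?_
  have hle : ∀ᵐ ω ∂μ, ∀ k ∈ S, Y k ω ≤ n :=
    (ae_ball_iff S.countable_toSet).2 fun k hk => ae_le_of_hasLaw_binomial (hY k hk)
  filter_upwards [hle] with ω hω
  rw [Real.norm_natCast]
  exact_mod_cast Finset.sup_le hω

lemma le_integral_sup_of_hasLaw_binomial (hS : S.Nonempty)
    (hY : ∀ k ∈ S, HasLaw (Y k) (binomial n p) μ) :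
    n * (p : ℝ) ≤ ∫ ω, ((S.sup fun k => Y k ω : ℕ) : ℝ) ∂μ := by
  obtain ⟨k, hk⟩ := hS
  calc n * (p : ℝ) = ∫ ω, (Y k ω : ℝ) ∂μ := by
        rw [← integral_natCast_binomial]
        exact ((hY k hk).integral_comp AEStronglyMeasurable.of_discrete).symm
    _ ≤ _ := integral_mono ((hY k hk).integrable_comp_binomial _)
        (integrable_natCast_sup_of_hasLaw_binomial hY)
        fun ω => Nat.cast_le.2 (le_sup (f := fun j => Y j ω) hk)

lemma integral_sup_le_of_hasLaw_binomial (hY : ∀ k ∈ S, HasLaw (Y k) (binomial n p) μ) :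
    ∫ ω, ((S.sup fun k => Y k ω : ℕ) : ℝ) ∂μ ≤ n * (p : ℝ) + S.card * √n := by
  have hc : 0 ≤ n * (p : ℝ) := mul_nonneg (Nat.cast_nonneg n) p.2.1
  have hint : ∀ k ∈ S, Integrable (fun ω => max ((Y k ω : ℝ) - n * p) 0) μ :=
    fun k hk => (hY k hk).integrable_comp_binomial fun x => max ((x : ℝ) - n * p) 0
  calc ∫ ω, ((S.sup fun k => Y k ω : ℕ) : ℝ) ∂μ
      ≤ ∫ ω, (n * (p : ℝ) + ∑ k ∈ S, max ((Y k ω : ℝ) - n * p) 0) ∂μ :=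
        integral_mono (integrable_natCast_sup_of_hasLaw_binomial hY)
          ((integrable_const _).add (integrable_finsetSum _ hint))
          fun ω => natCast_sup_le_add_sum_posPart S (fun k => Y k ω) hc
    _ = n * (p : ℝ) + ∑ k ∈ S, ∫ x, max ((x : ℝ) - n * p) 0 ∂binomial n p := by
        rw [integral_add (integrable_const _) (integrable_finsetSum _ hint),
          integral_finsetSum _ hint, integral_const, probReal_univ, one_smul]
        exact congrArg _ (sum_congr rfl fun k hk =>
          (hY k hk).integral_comp (f := fun x : ℕ => max ((x : ℝ) - n * p) 0)
            AEStronglyMeasurable.of_discrete)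
    _ ≤ n * (p : ℝ) + S.card * √n := by
        grw [sum_le_card_nsmul S _ (√n) fun k _ => integral_posPart_sub_binomial_le n p,
          nsmul_eq_mul]

theorem tendsto_integral_sup_div_of_hasLaw_binomial {Y : ℕ → ι → Ω → ℕ} (hS : S.Nonempty)
    (hY : ∀ᶠ n in atTop, ∀ k ∈ S, HasLaw (Y n k) (binomial n p) μ) :
    Tendsto (fun n : ℕ => (∫ ω, ((S.sup fun k => Y n k ω : ℕ) : ℝ) ∂μ) / n) atTop (𝓝 p) := by
  have herr : Tendsto (fun n : ℕ => (p : ℝ) + S.card / √n) atTop (𝓝 p) := by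
    simpa using tendsto_const_nhds.add (tendsto_const_nhds.div_atTop
      (Real.tendsto_sqrt_atTop.comp tendsto_natCast_atTop_atTop))
  refine tendsto_of_tendsto_of_tendsto_of_le_of_le' tendsto_const_nhds herr ?_ ?_ <;>
    filter_upwards [hY, eventually_gt_atTop 0] with n hYn hn <;>
    have hn' : (0 : ℝ) < n := Nat.cast_pos.2 hn
  · rw [le_div_iff₀ hn', mul_comm]
    exact le_integral_sup_of_hasLaw_binomial hS hYn
  · rw [div_le_iff₀ hn']
    calc _ ≤ n * (p : ℝ) + S.card * √n := integral_sup_le_of_hasLaw_binomial hYn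
      _ = (p + S.card / √n) * n := by
        field_simp
        linear_combination (S.card : ℝ) * Real.mul_self_sqrt hn'.le

end ProbabilityTheory

lemma sum_filter_nonempty_card {α M : Type*} [Fintype α] [AddCommMonoid M] (f : ℕ → M) :
    ∑ S ∈ univ.filter (fun S : Finset α => S.Nonempty), f S.card
      = ∑ s ∈ range (Fintype.card α), (Fintype.card α).choose (s + 1) • f (s + 1) := by
  classical
  set g : ℕ → M := fun s => if s = 0 then 0 else f s
  have hg : ∀ S : Finset α, (if S.Nonempty then f S.card else 0) = g S.card := fun S => by
    simp [g, ← card_pos, Nat.pos_iff_ne_zero, ite_not]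
  rw [sum_filter, sum_congr rfl fun S _ => hg S, ← powerset_univ, sum_powerset_apply_card g,
    card_univ, sum_range_succ']
  simp [g]

lemma sum_filter_nonempty_pow_card_pred {K : ℕ} {q : ℝ} (hq : q ≠ 0) :
    ∑ S ∈ univ.filter (fun S : Finset (Fin K) => S.Nonempty),
      q ^ (S.card - 1) * (1 - q) ^ (K - S.card + 1) = (1 - q) / q * (1 - (1 - q) ^ K) := by
  have hbinom := add_pow q (1 - q) K
  rw [add_sub_cancel, one_pow, sum_range_succ'] at hbinom
  simp only [pow_zero, one_mul, Nat.sub_zero, Nat.choose_zero_right, Nat.cast_one, mul_one]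
    at hbinom
  rw [sum_filter_nonempty_card (fun s => q ^ (s - 1) * (1 - q) ^ (K - s + 1)), Fintype.card_fin,
    ← eq_sub_of_add_eq hbinom.symm, mul_sum]
  refine sum_congr rfl fun s _ => ?_
  rw [Nat.add_sub_cancel, pow_succ, nsmul_eq_mul]
  field_simp
  ring

lemma pow_pred_mul_one_sub_pow_le {q : ℝ} (hq0 : 0 ≤ q) (hq : q ≤ 1 - q) {s K : ℕ}
    (hs : 1 ≤ s) (hsK : s ≤ K) : q ^ (s - 1) * (1 - q) ^ (K - s + 1) ≤ (1 - q) ^ K := by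
  calc q ^ (s - 1) * (1 - q) ^ (K - s + 1) ≤ (1 - q) ^ (s - 1) * (1 - q) ^ (K - s + 1) :=
        mul_le_mul_of_nonneg_right (pow_le_pow_left₀ hq0 hq _) (pow_nonneg (hq0.trans hq) _)
    _ = (1 - q) ^ K := by rw [← pow_add]; congr 1; omega

theorem stmt11_general
    {Ω : Type*} [MeasurableSpace Ω] (μ : Measure Ω) [IsProbabilityMeasure μ]
    (K m : ℕ) (hm : 2 ≤ m)
    (q : ℝ) (hq : q = 1 / (m : ℝ))
    (μval : ℕ → ℝ) (hμval : ∀ s, μval s = (m : ℝ) * q ^ (s - 1) * (1 - q) ^ (K - s + 1))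
    (hμ1 : μval 1 ≤ 1)
    (Y : ℕ → Finset (Fin K) → Fin K → Ω → ℕ)
    (hY_meas : ∀ F' S k, Measurable (Y F' S k))
    (hY_binom : ∀ F' : ℕ, 1 ≤ F' → ∀ S : Finset (Fin K), S.Nonempty → ∀ k ∈ S, ∀ j : ℕ,
      μ {ω | Y F' S k ω = j} =
        ENNReal.ofReal ((F'.choose j : ℝ) * μval S.card ^ j *
          (1 - μval S.card) ^ (F' - j))) :
    Filter.Tendsto
      (fun F' : ℕ => (1 / ((m : ℝ) * (F' : ℝ))) *
        ∑ S ∈ Finset.univ.filter (fun S : Finset (Fin K) => S.Nonempty),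
          ∫ ω, ((S.sup (fun k => Y F' S k ω) : ℕ) : ℝ) ∂μ)
      Filter.atTop
      (nhds (((1 - q) / q) * (1 - (1 - q) ^ K))) := by
  have hm0 : (0 : ℝ) < m := by positivity
  have hq0 : 0 < q := by rw [hq]; positivity
  have hqq : q ≤ 1 - q := by
    rw [hq, le_sub_iff_add_le, ← two_mul, mul_one_div, div_le_one hm0]
    exact_mod_cast hm
  have hμI : ∀ S : Finset (Fin K), S.Nonempty → μval S.card ∈ I := by
    intro S hS
    have hS1 : 1 ≤ S.card := card_pos.2 hS
    have hSK : S.card ≤ K := (card_le_univ S).trans_eq (Fintype.card_fin K)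
    refine ⟨?_, hμ1.trans' ?_⟩
    · rw [hμval]
      exact mul_nonneg (mul_nonneg hm0.le (pow_nonneg hq0.le _)) (pow_nonneg (by linarith) _)
    rw [hμval, hμval, mul_assoc, mul_assoc, Nat.sub_self, pow_zero, one_mul,
      Nat.sub_add_cancel (hS1.trans hSK)]
    exact mul_le_mul_of_nonneg_left (pow_pred_mul_one_sub_pow_le hq0.le hqq hS1 hSK) hm0.le
  have hlim : ∀ S ∈ univ.filter (fun S : Finset (Fin K) => S.Nonempty),
      Tendsto (fun F' : ℕ => (∫ ω, ((S.sup fun k => Y F' S k ω : ℕ) : ℝ) ∂μ) / F') atTop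
        (𝓝 (μval S.card)) := by
    intro S hS
    have hS := (mem_filter.1 hS).2
    exact tendsto_integral_sup_div_of_hasLaw_binomial (p := ⟨_, hμI S hS⟩) hS
      ((eventually_ge_atTop 1).mono fun F' hF' k hk =>
        hasLaw_binomial_of_measure_eq (hY_meas F' S k) (hY_binom F' hF' S hS k hk))
  have hsum : (∑ S ∈ univ.filter (fun S : Finset (Fin K) => S.Nonempty), μval S.card) / m
      = (1 - q) / q * (1 - (1 - q) ^ K) := by
    rw [← sum_filter_nonempty_pow_card_pred hq0.ne', sum_div]
    exact sum_congr rfl fun S _ => by rw [hμval]; field_simp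
  rw [← hsum]
  refine ((tendsto_finsetSum _ hlim).div_const m).congr fun F' => ?_
  rw [sum_div, mul_sum]
  exact sum_congr rfl fun S _ => by field_simp

/-- Fix integers `K ≥ 1` and `m ≥ 2`, set `q := 1/m` and
`μval s := m·q^(s−1)·(1−q)^(K−s+1)` for `1 ≤ s ≤ K`, and assume
`μval 1 = m·(1−q)^K ≤ 1`.  For each positive integer `F'` and each nonempty
`S ⊆ [K]`, let `(Y F' S k)_{k ∈ S}` be independent `Binomial(F', μval |S|)` random
variables.  Then
`lim_{F'→∞} (1/(m·F')) · ∑_{∅≠S⊆[K]} E[max_{k∈S} Y F' S k] = ((1−q)/q)·(1−(1−q)^K)`. -/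
theorem stmt11
    {Ω : Type*} [MeasurableSpace Ω] (μ : Measure Ω) [IsProbabilityMeasure μ]
    (K m : ℕ) (hK : 1 ≤ K) (hm : 2 ≤ m)
    (q : ℝ) (hq : q = 1 / (m : ℝ))
    (μval : ℕ → ℝ) (hμval : ∀ s, μval s = (m : ℝ) * q ^ (s - 1) * (1 - q) ^ (K - s + 1))
    (hμ1 : μval 1 ≤ 1)
    (Y : ℕ → Finset (Fin K) → Fin K → Ω → ℕ)
    (hY_meas : ∀ F' S k, Measurable (Y F' S k))
    (hY_indep : ∀ F' : ℕ, 1 ≤ F' → ∀ S : Finset (Fin K), S.Nonempty →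
      iIndepFun (fun k : {x : Fin K // x ∈ S} => Y F' S k.1) μ)
    (hY_binom : ∀ F' : ℕ, 1 ≤ F' → ∀ S : Finset (Fin K), S.Nonempty → ∀ k ∈ S, ∀ j : ℕ,
      μ {ω | Y F' S k ω = j} =
        ENNReal.ofReal ((F'.choose j : ℝ) * μval S.card ^ j *
          (1 - μval S.card) ^ (F' - j))) :
    Filter.Tendsto
      (fun F' : ℕ => (1 / ((m : ℝ) * (F' : ℝ))) *
        ∑ S ∈ Finset.univ.filter (fun S : Finset (Fin K) => S.Nonempty),
          ∫ ω, ((S.sup (fun k => Y F' S k ω) : ℕ) : ℝ) ∂μ)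
      Filter.atTop
      (nhds (((1 - q) / q) * (1 - (1 - q) ^ K))) :=
  stmt11_general μ K m hm q hq μval hμval hμ1 Y hY_meas hY_binom
end

section
/- Let K ≥ 2, m ≥ 1 and g ≥ 1 be integers such that m ≤ 4K/(27·ln K) and g ≤ K/(3m). Then (g+1)·K²·m < exp( 4K/(9m) ). -/
/-- Let `K ≥ 2`, `m ≥ 1`, `g ≥ 1` be integers with
`m ≤ 4K/(27·ln K)` and `g ≤ K/(3m)`.  Then `(g+1)·K²·m < exp(4K/(9m))`. -/
theorem stmt13 (K m g : ℕ) (hK : 2 ≤ K) (hm : 1 ≤ m) (hg : 1 ≤ g)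
    (h1 : (m : ℝ) ≤ 4 * K / (27 * Real.log K))
    (h2 : (g : ℝ) ≤ (K : ℝ) / (3 * (m : ℝ))) :
    ((g : ℝ) + 1) * (K : ℝ) ^ 2 * (m : ℝ) < Real.exp (4 * K / (9 * (m : ℝ))) := by
  have hKpos : (0:ℝ) < K := by positivity
  have hK2 : (2:ℝ) ≤ K := by exact_mod_cast hK
  have hmpos : (0:ℝ) < m := by exact_mod_cast hm
  have hg1 : (1:ℝ) ≤ g := by exact_mod_cast hg
  set a := Real.log K with ha
  have ha2 : (0.693 : ℝ) < a := by
    have h2a : (0.6931471803 : ℝ) < Real.log 2 := Real.log_two_gt_d9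
    have : Real.log 2 ≤ a := Real.log_le_log (by norm_num) hK2
    linarith
  have hapos : 0 < a := by linarith
  -- from h1 : 27 * a * m ≤ 4 * K
  have h1' : 27 * a * (m:ℝ) ≤ 4 * K := by
    have h27 : 0 < 27 * a := by linarith
    rw [le_div_iff₀ h27] at h1
    linarith
  set B := 4*(K:ℝ)/(9*(m:ℝ)) - 3*a with hB
  have hBnn : 0 ≤ B := by
    rw [hB, sub_nonneg, le_div_iff₀ (by linarith : (0:ℝ) < 9*(m:ℝ))]
    nlinarith
  have hsum : 4*(K:ℝ)/(9*(m:ℝ)) = 3*a + B := by rw [hB]; ring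
  -- g + 1 ≤ (3/4)*(3a+B) + 1
  have hg2 : (g:ℝ) + 1 ≤ (3/4)*(3*a+B) + 1 := by
    have hK3m : (K:ℝ)/(3*(m:ℝ)) = (3/4)*(4*(K:ℝ)/(9*(m:ℝ))) := by
      field_simp; ring
    rw [hK3m, hsum] at h2
    linarith
  -- m ≤ 4K/(27a)
  have hm2 : (m:ℝ) ≤ 4*(K:ℝ)/(27*a) := by
    rw [le_div_iff₀ (by linarith : (0:ℝ) < 27*a)]; linarith
  -- exp(3a+B) = K^3 * exp B
  have hexp : Real.exp (3*a + B) = (K:ℝ)^3 * Real.exp B := by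
    rw [Real.exp_add]
    have : Real.exp (3*a) = (K:ℝ)^3 := by
      rw [show (3:ℝ)*a = a + a + a by ring, Real.exp_add, Real.exp_add,
        Real.exp_log hKpos]; ring
    rw [this]
  rw [hsum, hexp]
  clear_value a B
  clear hB ha
  -- chain
  have step1 : ((g:ℝ)+1) * (K:ℝ)^2 * (m:ℝ) ≤ ((g:ℝ)+1) * (K:ℝ)^2 * (4*(K:ℝ)/(27*a)) := by
    apply mul_le_mul_of_nonneg_left hm2
    positivity
  have hexpB : 1 + B ≤ Real.exp B := by
    have := Real.add_one_le_exp B; linarith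
  have step2 : ((g:ℝ)+1) * (K:ℝ)^2 * (4*(K:ℝ)/(27*a)) < (K:ℝ)^3 * Real.exp B := by
    have key : ((g:ℝ)+1) * 4 < 27*a*(1+B) := by
      nlinarith [mul_nonneg (by linarith : (0:ℝ) ≤ 27*a - 3) hBnn]
    have hKcube : (0:ℝ) < (K:ℝ)^3 := by positivity
    have lhs_eq : ((g:ℝ)+1) * (K:ℝ)^2 * (4*(K:ℝ)/(27*a)) = (K:ℝ)^3 * (((g:ℝ)+1)*4/(27*a)) := by
      field_simp
    rw [lhs_eq]
    apply mul_lt_mul_of_pos_left _ hKcube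
    have : ((g:ℝ)+1)*4/(27*a) < 1 + B := by
      rw [div_lt_iff₀ (by linarith : (0:ℝ) < 27*a)]
      nlinarith
    linarith
  linarith
end
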